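/- arXiv:2402.00378 — 10 statements merged into one kernel-verified Lean document; each statement's English description precedes it below -/
import Mathlib

section
/- Suppose f : ℕ → ℕ satisfies f(n) ≤ ⌊√n⌋ for every n. Then for every n ≥ 1 and every i ≤ f*(n)/2, we have f^{(i)}(n) ≥ f*(n). -/
/-- `fstar f n = min {i : f^(i)(n) ≤ 1}`. -/
noncomputable def fstar (f : ℕ → ℕ) (n : ℕ) : ℕ := sInf {i | f^[i] n ≤ 1}

lemma fstar_ex (f : ℕ → ℕ) (hf : ∀ n, f n ≤ Nat.sqrt n) (n : ℕ) :
    ∃ i, f^[i] n ≤ 1 := by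
  induction n using Nat.strong_induction_on with
  | _ n ih =>
    rcases le_or_gt n 1 with h | h
    · exact ⟨0, h⟩
    · obtain ⟨i, hi⟩ := ih (f n) (lt_of_le_of_lt (hf n) (Nat.sqrt_lt_self h))
      exact ⟨i + 1, by simpa [Function.iterate_succ_apply] using hi⟩

lemma fstar_zero_of_le (f : ℕ → ℕ) {n : ℕ} (h : n ≤ 1) : fstar f n = 0 := by
  have : (0 : ℕ) ∈ {i | f^[i] n ≤ 1} := by simpa using h
  exact Nat.sInf_eq_zero.2 (Or.inl this)

lemma fstar_succ (f : ℕ → ℕ) (hf : ∀ n, f n ≤ Nat.sqrt n) {n : ℕ} (h : 1 < n) :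
    fstar f n = fstar f (f n) + 1 := by
  have hne : ({i | f^[i] n ≤ 1} : Set ℕ).Nonempty := fstar_ex f hf n
  have hmem : f^[fstar f n] n ≤ 1 := Nat.sInf_mem hne
  have hpos : 0 < fstar f n := by
    rcases Nat.eq_zero_or_pos (fstar f n) with h0 | h0
    · rw [h0] at hmem; simp at hmem; omega
    · exact h0
  -- fstar f n - 1 works for f n
  have h1 : f^[fstar f n - 1] (f n) ≤ 1 := by
    have := hmem
    rwa [show fstar f n = (fstar f n - 1) + 1 by omega,
      Function.iterate_succ_apply] at this
  have hle1 : fstar f (f n) ≤ fstar f n - 1 := Nat.sInf_le h1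
  have hmem2 : f^[fstar f (f n)] (f n) ≤ 1 := Nat.sInf_mem (fstar_ex f hf (f n))
  have hle2 : fstar f n ≤ fstar f (f n) + 1 :=
    Nat.sInf_le (by simpa [Function.iterate_succ_apply] using hmem2)
  omega

lemma fstar_bound (f : ℕ → ℕ) (hf : ∀ n, f n ≤ Nat.sqrt n) (m : ℕ) :
    2 * fstar f m ≤ m := by
  induction m using Nat.strong_induction_on with
  | _ m ih =>
    rcases le_or_gt m 1 with h | h
    · simp [fstar_zero_of_le f h]
    · have hlt : f m < m := lt_of_le_of_lt (hf m) (Nat.sqrt_lt_self h)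
      have hih := ih (f m) hlt
      rw [fstar_succ f hf h]
      rcases le_or_gt m 2 with h2 | h2
      · -- m = 2, f m ≤ 1, fstar (f m) = 0
        have hm2 : m = 2 := by omega
        subst hm2
        have : f 2 ≤ 1 := le_trans (hf 2) (by norm_num [Nat.sqrt])
        simp [fstar_zero_of_le f this]
      · -- m ≥ 3 : sqrt m + 2 ≤ m
        have hs : Nat.sqrt m + 2 ≤ m := by
          obtain ⟨k, rfl⟩ : ∃ k, m = k + 3 := ⟨m - 3, by omega⟩
          have : Nat.sqrt (k + 3) < k + 2 := by
            rw [Nat.sqrt_lt]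
            nlinarith
          omega
        have := hf m
        omega

lemma fstar_shift (f : ℕ → ℕ) (hf : ∀ n, f n ≤ Nat.sqrt n) (n : ℕ) :
    ∀ i, i ≤ fstar f n → fstar f n = i + fstar f (f^[i] n) := by
  intro i
  induction i with
  | zero => simp
  | succ i ih =>
    intro hi
    have h1 : fstar f n = i + fstar f (f^[i] n) := ih (by omega)
    have hpos : 0 < fstar f (f^[i] n) := by omega
    have hgt : 1 < f^[i] n := by
      by_contra hc
      push_neg at hc
      rw [fstar_zero_of_le f hc] at hpos; omega
    rw [h1, fstar_succ f hf hgt, Function.iterate_succ_apply']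
    omega

theorem stmt_2 (f : ℕ → ℕ) (hf : ∀ n, f n ≤ Nat.sqrt n) :
    ∀ n : ℕ, 1 ≤ n → ∀ i : ℕ, 2 * i ≤ fstar f n → fstar f n ≤ f^[i] n := by
  intro n _ i hi
  have hshift := fstar_shift f hf n i (by omega)
  have hb := fstar_bound f hf (f^[i] n)
  omega
end

section
/- For all i ≥ 1 and d ≥ 1, λ_{2i}(A(i, d)) = d. -/
/-- The inverse-Ackermann-type functions: `lam 1 n = ⌊√n⌋`, `lam 2 n = ⌈log₂ n⌉`,
`lam (d) = (lam (d-2))*` for `d ≥ 3`. -/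
noncomputable def lam : ℕ → ℕ → ℕ
  | 0 => fun _ => 0
  | 1 => Nat.sqrt
  | 2 => Nat.clog 2
  | d + 3 => fstar (lam (d + 1))


/-- The Ackermann function: `A(0,j) = 2j`, `A(i,1) = 2`, `A(i,j) = A(i-1, A(i,j-1))`. -/
def Ack : ℕ → ℕ → ℕ
  | 0, j => 2 * j
  | _ + 1, 0 => 1
  | _ + 1, 1 => 2
  | i + 1, j + 2 => Ack i (Ack (i + 1) (j + 1))
termination_by i j => (i, j)

lemma myack_one : ∀ d : ℕ, 1 ≤ d → Ack 1 d = 2 ^ d := by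
  intro d hd
  induction d with
  | zero => omega
  | succ j ih =>
    rcases j with _ | j
    · simp [Ack]
    · have := ih (by omega)
      rw [show j + 1 + 1 = j + 2 from rfl, Ack, Ack, this]
      ring

lemma two_le_ack : ∀ i j : ℕ, 1 ≤ j → 2 ≤ Ack i j
  | 0, j, h => by rw [Ack]; omega
  | _ + 1, 0, h => by omega
  | _ + 1, 1, _ => by rw [Ack]
  | i + 1, j + 2, _ => by
    have h1 : 2 ≤ Ack (i + 1) (j + 1) := two_le_ack (i + 1) (j + 1) (by omega)
    have h2 : 2 ≤ Ack i (Ack (i + 1) (j + 1)) :=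
      two_le_ack i (Ack (i + 1) (j + 1)) (by omega)
    rw [Ack]; exact h2
termination_by i j => (i, j)

theorem stmt_6 : ∀ i : ℕ, 1 ≤ i → ∀ d : ℕ, 1 ≤ d → lam (2 * i) (Ack i d) = d := by
  intro i hi
  induction i with
  | zero => omega
  | succ k ih =>
    rcases k with _ | m
    · intro d hd
      rw [show 2 * 1 = 2 from rfl, myack_one d hd]
      show Nat.clog 2 (2 ^ d) = d
      exact Nat.clog_pow 2 d (by norm_num)
    · -- i = m + 2
      have IH := ih (by omega)
      intro d hd
      set f := lam (2 * (m + 1)) with hf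
      have hlam : lam (2 * (m + 2)) = fstar f := by
        rw [hf, show 2 * (m + 1) = (2 * m + 1) + 1 by ring,
          show 2 * (m + 2) = (2 * m + 1) + 3 by ring, lam]
      have hiter : ∀ k : ℕ, k ≤ d - 1 → f^[k] (Ack (m + 2) d) = Ack (m + 2) (d - k) := by
        intro k hk
        induction k with
        | zero => simp
        | succ n ihn =>
          have hn : n ≤ d - 1 := by omega
          rw [Function.iterate_succ_apply', ihn hn]
          obtain ⟨j, hj⟩ : ∃ j, d - n = j + 2 := ⟨d - n - 2, by omega⟩
          rw [hj, show m + 2 = (m+1)+1 from rfl, Ack]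
          rw [IH (Ack (m + 2) (j + 1)) (by linarith [two_le_ack (m + 2) (j + 1) (by omega)])]
          congr 1
          omega
      have hd1 : f^[d] (Ack (m + 2) d) = 1 := by
        obtain ⟨e, he⟩ : ∃ e, d = e + 1 := ⟨d - 1, by omega⟩
        rw [he] at hiter ⊢
        rw [Function.iterate_succ_apply', hiter e (by omega),
          show e + 1 - e = 1 from by omega]
        have h2 : Ack (m + 2) 1 = 2 := by rw [Ack]
        have h3 : Ack (m + 1) 1 = 2 := by rw [Ack]
        rw [h2, ← h3]
        exact IH 1 le_rfl
      rw [hlam, fstar]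
      have hmem : d ∈ {i | f^[i] (Ack (m + 2) d) ≤ 1} := by
        simp only [Set.mem_setOf_eq]
        exact hd1.le
      refine le_antisymm (Nat.sInf_le hmem) ?_
      by_contra h
      push_neg at h
      have hmem' := Nat.sInf_mem ⟨d, hmem⟩
      simp only [Set.mem_setOf_eq] at hmem'
      set s := sInf {i | f^[i] (Ack (m + 2) d) ≤ 1}
      have hs : s ≤ d - 1 := by omega
      rw [hiter s hs] at hmem'
      have := two_le_ack (m + 2) (d - s) (by omega)
      omega
end

section
/- For all i ≥ 1 and d ≥ 1, λ_{2i}(A(i, d) + 1) = d + 1. -/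
/-!
`λ_{2i+2}(n)` counts the applications of `λ_{2i}` needed to bring `n` down to `1`.
With `A(i+1, 0) = 1` the recursion `A(i+1, d+1) = A(i, A(i+1, d))` holds for all `d ≥ 0`,
and the claim is proved for all `d ≥ 0` by induction on `i`. If `λ_{2i}` maps `A(i, m) + 1`
to `m + 1`, it maps `A(i+1, d+1) + 1` to `A(i+1, d) + 1`, so iterating it from `A(i+1, d) + 1`
descends through `A(i+1, d-1) + 1, …, A(i+1, 0) + 1 = 2` and reaches `1` after exactly
`d + 1` steps. The base case is `⌈log₂ (2^d + 1)⌉ = d + 1`.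
-/

theorem Ack_zero_left (j : ℕ) : Ack 0 j = 2 * j := by
  rw [Ack]

theorem Ack_succ_zero (i : ℕ) : Ack (i + 1) 0 = 1 := by
  rw [Ack]

theorem Ack_succ_one (i : ℕ) : Ack (i + 1) 1 = 2 := by
  rw [Ack]

theorem Ack_succ_succ (i j : ℕ) : Ack (i + 1) (j + 1) = Ack i (Ack (i + 1) j) := by
  rcases j with _ | j
  · rw [Ack_succ_one, Ack_succ_zero]
    rcases i with _ | i
    · exact (Ack_zero_left 1).symm
    · exact (Ack_succ_one i).symm
  · rw [Ack]

theorem Ack_one (d : ℕ) : Ack 1 d = 2 ^ d := by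
  induction d with
  | zero => exact Ack_succ_zero 0
  | succ d ih => rw [Ack_succ_succ, Ack_zero_left, ih, pow_succ, mul_comm]

theorem Ack_succ_pos (i j : ℕ) : 0 < Ack (i + 1) j := by
  induction i generalizing j with
  | zero => rw [Ack_one]; positivity
  | succ i ih =>
    rcases j with _ | j
    · rw [Ack_succ_zero]; exact one_pos
    · rw [Ack_succ_succ]; exact ih _

theorem Nat.clog_two_pow_add_one (d : ℕ) : Nat.clog 2 (2 ^ d + 1) = d + 1 := by
  refine le_antisymm ?_ ?_
  · rw [Nat.clog_le_iff_le_pow one_lt_two, pow_succ, mul_two, add_le_add_iff_left]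
    exact Nat.one_le_two_pow
  · exact (Nat.lt_clog_iff_pow_lt one_lt_two).2 (Nat.lt_succ_self _)

theorem lam_add_three (d : ℕ) : lam (d + 3) = fstar (lam (d + 1)) := by
  rw [lam]

theorem isLeast_iterate_le_one_zero {f : ℕ → ℕ} {n : ℕ} (hn : n ≤ 1) :
    IsLeast {i | f^[i] n ≤ 1} 0 :=
  ⟨hn, fun _ _ => Nat.zero_le _⟩

theorem isLeast_iterate_le_one_succ {f : ℕ → ℕ} {n k : ℕ} (hn : 1 < n)
    (hk : IsLeast {i | f^[i] (f n) ≤ 1} k) : IsLeast {i | f^[i] n ≤ 1} (k + 1) := by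
  refine ⟨hk.1, fun j hj => ?_⟩
  rcases j with _ | j
  · exact absurd hj (not_le.2 hn)
  · exact Nat.succ_le_succ (hk.2 hj)

theorem isLeast_iterate_Ack_add_one {f : ℕ → ℕ} {i : ℕ}
    (hf : ∀ m, f (Ack (i + 1) m + 1) = m + 1) (d : ℕ) :
    IsLeast {k | f^[k] (Ack (i + 2) d + 1) ≤ 1} (d + 1) := by
  have one_lt (d : ℕ) : 1 < Ack (i + 2) d + 1 := Nat.lt_add_of_pos_left (Ack_succ_pos _ _)
  induction d with
  | zero =>
    have f_two : f 2 = 1 := by simpa only [Ack_succ_zero] using hf 0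
    refine isLeast_iterate_le_one_succ (one_lt 0) (isLeast_iterate_le_one_zero ?_)
    rw [Ack_succ_zero, f_two]
  | succ d ih =>
    refine isLeast_iterate_le_one_succ (one_lt (d + 1)) ?_
    rwa [Ack_succ_succ, hf]

theorem lam_two_mul_succ_Ack_add_one (i d : ℕ) :
    lam (2 * (i + 1)) (Ack (i + 1) d + 1) = d + 1 := by
  induction i generalizing d with
  | zero => rw [Ack_one]; exact Nat.clog_two_pow_add_one d
  | succ i ih =>
    rw [show 2 * (i + 1 + 1) = 2 * i + 1 + 3 by ring, lam_add_three,
      show 2 * i + 1 + 1 = 2 * (i + 1) by ring]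
    exact (isLeast_iterate_Ack_add_one ih d).csInf_eq

theorem stmt_7 : ∀ i : ℕ, 1 ≤ i → ∀ d : ℕ, 1 ≤ d →
    lam (2 * i) (Ack i d + 1) = d + 1 := by
  rintro (_ | i) hi d -
  · omega
  · exact lam_two_mul_succ_Ack_add_one i d
end

section
/- For all i ≥ 1 and d ≥ 1, A(i, d) = max{n : λ_{2i}(n) ≤ d}. -/
/-- `f` maps `{0, 1}` into itself and decreases every `m ≥ 2`. -/
def Shrinks (f : ℕ → ℕ) : Prop := ∀ m, f m < max 2 m

namespace Shrinks

variable {f : ℕ → ℕ}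

theorem iterate_le (hf : Shrinks f) (k n : ℕ) : f^[k] n ≤ max 1 (n - k) := by
  induction k with
  | zero => simp
  | succ k ih =>
    rw [Function.iterate_succ_apply']
    have := hf (f^[k] n)
    omega

theorem mapsTo_Iic_one (hf : Shrinks f) : Set.MapsTo f (Set.Iic 1) (Set.Iic 1) := by
  intro m hm
  have := hf m
  simp only [Set.mem_Iic] at hm ⊢
  omega

theorem iterate_le_one_mono (hf : Shrinks f) {n k l : ℕ} (hkl : k ≤ l) (hk : f^[k] n ≤ 1) :
    f^[l] n ≤ 1 := by
  obtain ⟨j, rfl⟩ := Nat.exists_eq_add_of_le hkl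
  rw [Nat.add_comm, Function.iterate_add_apply]
  exact hf.mapsTo_Iic_one.iterate j hk

theorem fstar_le_iff (hf : Shrinks f) {n d : ℕ} : fstar f n ≤ d ↔ f^[d] n ≤ 1 := by
  have hn : f^[n] n ≤ 1 := by simpa using hf.iterate_le n n
  exact ⟨fun h ↦ hf.iterate_le_one_mono h (Nat.sInf_mem (s := {i | f^[i] n ≤ 1}) ⟨n, hn⟩),
    fun h ↦ Nat.sInf_le h⟩

end Shrinks

theorem Shrinks.fstar {f : ℕ → ℕ} (hf : Shrinks f) : Shrinks (fstar f) := by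
  intro m
  have h := hf.iterate_le (m - 1) m
  have : _ ≤ m - 1 := hf.fstar_le_iff.2 (by omega : f^[m - 1] m ≤ 1)
  omega

theorem GaloisConnection.iterate {f g : ℕ → ℕ} (gc : GaloisConnection f g) (k : ℕ) :
    GaloisConnection f^[k] g^[k] := by
  induction k with
  | zero => exact GaloisConnection.id
  | succ k ih => rw [Function.iterate_succ, Function.iterate_succ']; exact gc.compose ih

theorem lam_two_mul_add_two (i : ℕ) : lam (2 * (i + 2)) = fstar (lam (2 * (i + 1))) := by
  rw [show 2 * (i + 2) = 2 * i + 1 + 3 by ring, lam, show 2 * i + 1 + 1 = 2 * (i + 1) by ring]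

theorem shrinks_lam (i : ℕ) : Shrinks (lam (2 * (i + 1))) := by
  induction i with
  | zero =>
    intro m
    have : Nat.clog 2 m ≤ m - 1 :=
      (Nat.clog_le_iff_le_pow one_lt_two).2 <| by have := Nat.lt_two_pow_self (n := m - 1); omega
    change Nat.clog 2 m < max 2 m
    omega
  | succ i ih => rw [lam_two_mul_add_two]; exact ih.fstar

theorem Ack_one_right (i : ℕ) : Ack i 1 = 2 := by
  cases i <;> simp [Ack]

theorem Ack_succ_eq_iterate (i d : ℕ) : Ack (i + 1) d = (Ack i)^[d] 1 := by
  induction d using Nat.strong_induction_on with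
  | _ d ih =>
    match d with
    | 0 => simp [Ack]
    | 1 => simp [Ack_one_right]
    | d + 2 => rw [Ack, ih (d + 1) (by omega), ← Function.iterate_succ_apply' (Ack i)]

theorem gc_lam_Ack (i : ℕ) : GaloisConnection (lam (2 * (i + 1))) (Ack (i + 1)) := by
  induction i with
  | zero =>
    intro n d
    rw [Ack_one]
    exact Nat.clog_le_iff_le_pow one_lt_two
  | succ i ih =>
    intro n d
    rw [lam_two_mul_add_two, (shrinks_lam i).fstar_le_iff, Ack_succ_eq_iterate]
    exact ih.iterate d n 1

theorem stmt_8 : ∀ i : ℕ, 1 ≤ i → ∀ d : ℕ, 1 ≤ d →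
    IsGreatest {n : ℕ | lam (2 * i) n ≤ d} (Ack i d) := by
  intro i hi d _
  obtain ⟨i, rfl⟩ := Nat.exists_eq_add_of_le' hi
  exact ⟨(gc_lam_Ack i).l_u_le d, fun _ ↦ (gc_lam_Ack i).le_u⟩
end

section
/- For all i ≥ 1 and d ≥ 1, A(i, λ_{2i}(d)) ≥ d. -/
namespace Ack

theorem zero_left (j : ℕ) : Ack 0 j = 2 * j := by
  rw [Ack]

theorem succ_zero (i : ℕ) : Ack (i + 1) 0 = 1 := by
  rw [Ack]

theorem one_right (i : ℕ) : Ack i 1 = 2 := by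
  cases i <;> rw [Ack]

/-- Since `A(i, 1) = 2` also for `i = 0`, the recursion holds at `j = 1` as well. -/
theorem succ_succ (i m : ℕ) : Ack (i + 1) (m + 1) = Ack i (Ack (i + 1) m) := by
  cases m with
  | zero => rw [succ_zero, one_right, one_right]
  | succ m => rw [Ack]

theorem one_left (j : ℕ) : Ack 1 j = 2 ^ j := by
  induction j with
  | zero => exact succ_zero 0
  | succ j ih => rw [succ_succ, ih, zero_left, pow_succ, mul_comm]

theorem self_lt (i : ℕ) {n : ℕ} (hn : 1 ≤ n) : n < Ack i n := by
  induction i generalizing n with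
  | zero => rw [zero_left]; omega
  | succ i ih =>
    induction n, hn using Nat.le_induction with
    | base => rw [one_right]; omega
    | succ n hn ihn =>
      rw [succ_succ]
      exact lt_of_le_of_lt ihn (ih (by omega))

theorem self_le (i n : ℕ) : n ≤ Ack i n := by
  rcases Nat.eq_zero_or_pos n with rfl | hn
  · exact Nat.zero_le _
  · exact (self_lt i hn).le

theorem monotone (i : ℕ) : Monotone (Ack i) := by
  refine monotone_nat_of_le_succ fun j => ?_
  cases i with
  | zero => rw [zero_left, zero_left]; omega
  | succ i => rw [succ_succ]; exact self_le i _

end Ack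

theorem iterate_le_one_of_le_succ {f : ℕ → ℕ} (hf : ∀ n, f n < max n 2) {m x : ℕ}
    (hx : x ≤ m + 1) : f^[m] x ≤ 1 := by
  induction m generalizing x with
  | zero => simpa using hx
  | succ m ih =>
    rw [Function.iterate_succ_apply]
    exact ih (by have := hf x; omega)

theorem iterate_fstar_le_one {f : ℕ → ℕ} (hf : ∀ n, f n < max n 2) (n : ℕ) :
    f^[fstar f n] n ≤ 1 :=
  Nat.sInf_mem (s := {i | f^[i] n ≤ 1}) ⟨n, iterate_le_one_of_le_succ hf (by omega)⟩

theorem fstar_lt_max {f : ℕ → ℕ} (hf : ∀ n, f n < max n 2) (n : ℕ) : fstar f n < max n 2 := by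
  have : fstar f n ≤ n - 1 :=
    Nat.sInf_le (s := {i | f^[i] n ≤ 1}) (iterate_le_one_of_le_succ hf (by omega))
  omega

theorem lam_two_mul_succ {i : ℕ} (hi : 1 ≤ i) : lam (2 * (i + 1)) = fstar (lam (2 * i)) := by
  obtain ⟨k, rfl⟩ := Nat.exists_eq_add_of_le' hi
  rw [show 2 * (k + 1 + 1) = 2 * k + 1 + 3 by ring, show 2 * (k + 1) = 2 * k + 1 + 1 by ring]
  rfl

theorem Nat.clog_lt_max {b : ℕ} (hb : 1 < b) (n : ℕ) : Nat.clog b n < max n 2 := by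
  have : Nat.clog b n ≤ n - 1 := by
    refine (Nat.clog_le_iff_le_pow hb).2 ?_
    have := Nat.lt_pow_self (n := n - 1) hb
    omega
  omega

theorem lam_two_mul_lt_max {i : ℕ} (hi : 1 ≤ i) (n : ℕ) : lam (2 * i) n < max n 2 := by
  induction i, hi using Nat.le_induction generalizing n with
  | base => exact Nat.clog_lt_max one_lt_two n
  | succ i hi ih => rw [lam_two_mul_succ hi]; exact fstar_lt_max ih n

theorem le_ack_succ_of_iterate_le_one {f : ℕ → ℕ} {i : ℕ}
    (hf : ∀ d, 1 ≤ d → d ≤ Ack i (f d)) {m d : ℕ} (hm : f^[m] d ≤ 1) : d ≤ Ack (i + 1) m := by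
  induction m generalizing d with
  | zero => rw [Ack.succ_zero]; exact hm
  | succ m ih =>
    rcases Nat.eq_zero_or_pos d with rfl | hd
    · exact Nat.zero_le _
    · rw [Function.iterate_succ_apply] at hm
      calc d ≤ Ack i (f d) := hf d hd
        _ ≤ Ack i (Ack (i + 1) m) := Ack.monotone i (ih hm)
        _ = Ack (i + 1) (m + 1) := (Ack.succ_succ i m).symm

theorem stmt_9 : ∀ i : ℕ, 1 ≤ i → ∀ d : ℕ, 1 ≤ d → d ≤ Ack i (lam (2 * i) d) := by
  intro i hi
  induction i, hi using Nat.le_induction with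
  | base =>
    intro d _
    rw [Ack.one_left]
    exact Nat.le_pow_clog one_lt_two d
  | succ i hi ih =>
    intro d _
    rw [lam_two_mul_succ hi]
    exact le_ack_succ_of_iterate_le_one ih (iterate_fstar_le_one (lam_two_mul_lt_max hi) d)
end

section
/- Let c > 0 be a constant. For all sufficiently large d (depending only on c), λ_d(⌈c · d · 2^{d/2}⌉) ≤ d. -/
/-!
Every `lam d` with `d ≥ 2` is bounded by `⌈log₂ ·⌉`: the class of monotone maps sending each
`m ≥ 2` into `[1, m)` is closed under `f ↦ f*`, and `f* ≤ f` on it, so `lam (d + 2) ≤ lam d`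
for `d ≥ 1`; this reduces everything to `lam 2 = ⌈log₂ ·⌉` and `lam 3 ≤ ⌈log₂ ·⌉`, the latter
because `k` square roots bring any `n < 2 ^ 2 ^ k` down to `1`. Finally `c d 2^{d/2} ≤ 2^d`
for large `d`, and `⌈log₂ ·⌉` of a number at most `2^d` is at most `d`.
-/

open Filter Topology

structure IsShrinking (f : ℕ → ℕ) : Prop where
  monotone : Monotone f
  pos : ∀ m, 2 ≤ m → 0 < f m
  lt_self : ∀ m, 2 ≤ m → f m < m

theorem fstar_le_of_iterate_le_one {f : ℕ → ℕ} {n i : ℕ} (h : f^[i] n ≤ 1) : fstar f n ≤ i :=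
  Nat.sInf_le h

theorem fstar_eq_zero_of_le_one (f : ℕ → ℕ) {n : ℕ} (hn : n ≤ 1) : fstar f n = 0 :=
  Nat.le_zero.mp (fstar_le_of_iterate_le_one hn)

namespace IsShrinking

variable {f : ℕ → ℕ}

theorem exists_iterate_le_one (hf : IsShrinking f) (n : ℕ) : ∃ i, f^[i] n ≤ 1 := by
  induction n using Nat.strong_induction_on with
  | _ n ih =>
    rcases le_or_gt n 1 with hn | hn
    · exact ⟨0, hn⟩
    · obtain ⟨i, hi⟩ := ih (f n) (hf.lt_self n hn)
      exact ⟨i + 1, hi⟩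

theorem iterate_fstar_le_one (hf : IsShrinking f) (n : ℕ) : f^[fstar f n] n ≤ 1 :=
  Nat.sInf_mem (hf.exists_iterate_le_one n)

theorem fstar_le_fstar_apply_add_one (hf : IsShrinking f) (n : ℕ) :
    fstar f n ≤ fstar f (f n) + 1 :=
  fstar_le_of_iterate_le_one (hf.iterate_fstar_le_one (f n))

theorem fstar_le_apply (hf : IsShrinking f) (n : ℕ) : fstar f n ≤ f n := by
  induction n using Nat.strong_induction_on with
  | _ n ih =>
    rcases le_or_gt n 1 with hn | hn
    · simp [fstar_eq_zero_of_le_one f hn]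
    have hstep := hf.fstar_le_fstar_apply_add_one n
    rcases le_or_gt (f n) 1 with hfn | hfn
    · have := hf.pos n hn
      rw [fstar_eq_zero_of_le_one f hfn] at hstep
      omega
    · have := ih (f n) (hf.lt_self n hn)
      have := hf.lt_self (f n) hfn
      omega

theorem fstar (hf : IsShrinking f) : IsShrinking (fstar f) where
  monotone _ _ hnm :=
    fstar_le_of_iterate_le_one ((hf.monotone.iterate _ hnm).trans (hf.iterate_fstar_le_one _))
  pos m hm := Nat.pos_of_ne_zero fun h0 => by
    have := hf.iterate_fstar_le_one m
    rw [h0] at this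
    exact absurd this (by simp; omega)
  lt_self m hm := (hf.fstar_le_apply m).trans_lt (hf.lt_self m hm)

end IsShrinking

theorem fstar_le_fstar {f g : ℕ → ℕ} (hf : Monotone f) (hg : IsShrinking g) (hfg : f ≤ g)
    (n : ℕ) : fstar f n ≤ fstar g n :=
  fstar_le_of_iterate_le_one ((hf.iterate_le_of_le hfg _ n).trans (hg.iterate_fstar_le_one n))

theorem isShrinking_sqrt : IsShrinking Nat.sqrt where
  monotone _ _ := Nat.sqrt_le_sqrt
  pos _ hm := Nat.sqrt_pos.mpr (by omega)
  lt_self _ hm := Nat.sqrt_lt_self (by omega)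

theorem isShrinking_clog : IsShrinking (Nat.clog 2) where
  monotone _ _ := Nat.clog_mono_right 2
  pos _ hm := Nat.clog_pos (by norm_num) hm
  lt_self m hm := by
    have : Nat.clog 2 m ≤ m - 1 := Nat.clog_le_of_le_pow (by
      have := Nat.lt_two_pow_self (n := m - 1)
      omega)
    omega

theorem isShrinking_lam : ∀ d, IsShrinking (lam (d + 1))
  | 0 => isShrinking_sqrt
  | 1 => isShrinking_clog
  | d + 2 => (isShrinking_lam d).fstar

theorem lam_add_three_le : ∀ d n, lam (d + 3) n ≤ lam (d + 1) n
  | 0, n => isShrinking_sqrt.fstar_le_apply n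
  | 1, n => isShrinking_clog.fstar_le_apply n
  | d + 2, n =>
    fstar_le_fstar (isShrinking_lam (d + 2)).monotone (isShrinking_lam d) (lam_add_three_le d) n

theorem sqrt_iterate_le_one {k n : ℕ} (h : n < 2 ^ 2 ^ k) : Nat.sqrt^[k] n ≤ 1 := by
  induction k generalizing n with
  | zero => simpa [Nat.lt_succ_iff] using h
  | succ k ih =>
    refine ih (Nat.sqrt_lt'.mpr ?_)
    rwa [← pow_mul, ← pow_succ]

theorem lam_three_le_clog (n : ℕ) : lam 3 n ≤ Nat.clog 2 n :=
  fstar_le_of_iterate_le_one <| sqrt_iterate_le_one <|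
    (Nat.le_pow_clog (by norm_num) n).trans_lt (Nat.pow_lt_pow_right (by norm_num)
      Nat.lt_two_pow_self)

theorem lam_le_clog : ∀ d, 2 ≤ d → ∀ n, lam d n ≤ Nat.clog 2 n
  | 2, _, _ => le_rfl
  | 3, _, n => lam_three_le_clog n
  | d + 4, _, n => (lam_add_three_le (d + 1) n).trans (lam_le_clog (d + 2) (by omega) n)

theorem eventually_mul_le_two_rpow_half (c : ℝ) :
    ∀ᶠ d : ℕ in atTop, c * d ≤ (2 : ℝ) ^ ((d : ℝ) / 2) := by
  have hlim : Tendsto (fun d : ℕ => c * ((d : ℝ) ^ 1 / √2 ^ d)) atTop (𝓝 0) := by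
    simpa using (tendsto_pow_const_div_const_pow_of_one_lt 1 Real.one_lt_sqrt_two).const_mul c
  filter_upwards [hlim.eventually (gt_mem_nhds one_pos)] with d hd
  have hsqrt : (2 : ℝ) ^ ((d : ℝ) / 2) = √2 ^ d := by
    rw [Real.sqrt_eq_rpow, ← Real.rpow_mul_natCast (by norm_num)]
    ring_nf
  rw [hsqrt]
  rw [pow_one, ← mul_div_assoc, div_lt_one (by positivity)] at hd
  exact hd.le

theorem ceil_mul_two_rpow_half_le {c : ℝ} {d : ℕ} (h : c * d ≤ (2 : ℝ) ^ ((d : ℝ) / 2)) :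
    ⌈c * d * (2 : ℝ) ^ ((d : ℝ) / 2)⌉₊ ≤ 2 ^ d := by
  rw [Nat.ceil_le]
  calc c * d * (2 : ℝ) ^ ((d : ℝ) / 2)
      ≤ (2 : ℝ) ^ ((d : ℝ) / 2) * (2 : ℝ) ^ ((d : ℝ) / 2) := by gcongr
    _ = ((2 ^ d : ℕ) : ℝ) := by
      rw [← Real.rpow_add two_pos, add_halves]
      simp

theorem stmt_10_general (c : ℝ) :
    ∃ D : ℕ, ∀ d : ℕ, D ≤ d →
      lam d ⌈c * d * (2 : ℝ) ^ ((d : ℝ) / 2)⌉₊ ≤ d := by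
  obtain ⟨D, hD⟩ := eventually_atTop.mp (eventually_mul_le_two_rpow_half c)
  refine ⟨max D 2, fun d hd => ?_⟩
  exact (lam_le_clog d (le_of_max_le_right hd) _).trans
    (Nat.clog_le_of_le_pow (ceil_mul_two_rpow_half_le (hD d (le_of_max_le_left hd))))

theorem stmt_10 (c : ℝ) (hc : 0 < c) :
    ∃ D : ℕ, ∀ d : ℕ, D ≤ d →
      lam d ⌈c * d * (2 : ℝ) ^ ((d : ℝ) / 2)⌉₊ ≤ d :=
  stmt_10_general c
end

section
/- A linear code C : F^n → F^m (over a field F) with generator matrix M ∈ F^{n×m}, so that C(x) = xM, satisfies dist(C(x), C(y)) ≥ m - dist(x, y) + 1 for all distinct x, y ∈ F^n if and only if every square submatrix of M (indexed by any equal-size subsets of rows and columns) is nonsingular. -/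
/-!
For a linear code the distance bound says that every nonzero message `v` has
`wt v + wt (v M) ≥ m + 1`. A nonzero `v` violating this gives a square submatrix whose rows
contain the support of `v` and whose columns lie among the zeros of `v M`; then `v` is a
nontrivial left kernel vector of it. Conversely a left kernel vector of a singular `k × k`
submatrix, extended by zero, has weight at most `k` and `v M` vanishes on `k` columns.
-/

open Finset Function Matrix

section

variable {ι κ : Type*}

lemma hammingDist_eq_hammingNorm_sub [Fintype ι] {β : ι → Type*} [∀ i, DecidableEq (β i)]
    [∀ i, AddGroup (β i)] (x y : ∀ i, β i) : hammingDist x y = hammingNorm (x - y) := by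
  simp_rw [hammingDist, hammingNorm, Pi.sub_apply, sub_ne_zero]

lemma Finset.exists_fin_injective_range_eq (s : Finset ι) {k : ℕ} (hs : #s = k) :
    ∃ f : Fin k → ι, Injective f ∧ Set.range f = s :=
  ⟨Subtype.val ∘ (Fintype.equivFinOfCardEq (α := s) (by simpa using hs)).symm,
    Subtype.val_injective.comp (Equiv.injective _), by simp [Set.range_comp]⟩

section Weight

variable [Fintype ι] [Fintype κ] {R : Type*} [Zero R] [DecidableEq R] {k : Type*} [Fintype k]

lemma hammingNorm_le_card_of_eq_zero_off_range {X : k → ι} {v : ι → R}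
    (hv : ∀ i ∉ Set.range X, v i = 0) : hammingNorm v ≤ Fintype.card k := by
  classical
  have hsupp : ({i | v i ≠ 0} : Finset ι) ⊆ univ.image X := fun i hi ↦ by
    by_contra hiX
    exact (mem_filter.1 hi).2 (hv i (by simpa using hiX))
  exact (card_le_card hsupp).trans card_image_le

lemma hammingNorm_add_card_le_of_eq_zero_on_range {Y : k → κ} (hY : Injective Y) {u : κ → R}
    (hu : ∀ b, u (Y b) = 0) : hammingNorm u + Fintype.card k ≤ Fintype.card κ := by
  classical
  have hdisj : Disjoint ({j | u j ≠ 0} : Finset κ) (univ.image Y) := by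
    rw [disjoint_left]
    intro _ hj hjY
    obtain ⟨b, -, rfl⟩ := mem_image.1 hjY
    exact (mem_filter.1 hj).2 (hu b)
  calc hammingNorm u + Fintype.card k = #(({j | u j ≠ 0} : Finset κ) ∪ univ.image Y) := by
        rw [card_union_of_disjoint hdisj, card_image_of_injective _ hY, card_univ]; rfl
    _ ≤ Fintype.card κ := card_le_univ _

end Weight

lemma vecMul_submatrix_of_eq_zero_off_range [Fintype ι] {R : Type*} [NonUnitalNonAssocSemiring R]
    {k : Type*} [Fintype k] (M : Matrix ι κ R) {X : k → ι} (hX : Injective X) (Y : k → κ)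
    {v : ι → R} (hv : ∀ i ∉ Set.range X, v i = 0) :
    (v ∘ X) ᵥ* M.submatrix X Y = (v ᵥ* M) ∘ Y := by
  ext b
  exact Fintype.sum_of_injective X hX _ _ (fun i hi ↦ by simp [hv i hi]) fun _ ↦ rfl

variable [Fintype ι] {F : Type*} [Field F]

lemma det_submatrix_eq_zero_iff {k : Type*} [Fintype k] [DecidableEq k] (M : Matrix ι κ F)
    {X : k → ι} (hX : Injective X) (Y : k → κ) :
    (M.submatrix X Y).det = 0 ↔
      ∃ v ≠ 0, (∀ i ∉ Set.range X, v i = 0) ∧ ∀ b, (v ᵥ* M) (Y b) = 0 := by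
  rw [← exists_vecMul_eq_zero_iff]
  constructor
  · rintro ⟨w, hw0, hw⟩
    have hvX : extend X w 0 ∘ X = w := extend_comp hX _ _
    have hv : ∀ i ∉ Set.range X, extend X w 0 i = 0 := fun i hi ↦ extend_apply' _ _ _ hi
    refine ⟨extend X w 0, fun h ↦ hw0 (by rw [← hvX, h]; rfl), hv, fun b ↦ ?_⟩
    rw [← comp_apply (f := extend X w 0 ᵥ* M),
      ← vecMul_submatrix_of_eq_zero_off_range M hX Y hv, hvX, hw, Pi.zero_apply]
  · rintro ⟨v, hv0, hvX, hvY⟩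
    refine ⟨v ∘ X, fun h ↦ hv0 (funext fun i ↦ ?_), ?_⟩
    · by_cases hi : i ∈ Set.range X
      · obtain ⟨a, rfl⟩ := hi
        exact congrFun h a
      · exact hvX i hi
    · rw [vecMul_submatrix_of_eq_zero_off_range M hX Y hvX]
      exact funext hvY

variable [Fintype κ] [DecidableEq F]

lemma exists_hammingNorm_add_le_of_det_submatrix_eq_zero {k : Type*} [Fintype k] [DecidableEq k]
    (M : Matrix ι κ F) {X : k → ι} {Y : k → κ} (hX : Injective X) (hY : Injective Y)
    (hdet : (M.submatrix X Y).det = 0) :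
    ∃ v ≠ 0, hammingNorm v + hammingNorm (v ᵥ* M) ≤ Fintype.card κ := by
  obtain ⟨v, hv0, hvX, hvY⟩ := (det_submatrix_eq_zero_iff M hX Y).1 hdet
  have hv := hammingNorm_le_card_of_eq_zero_off_range hvX
  have hvM := hammingNorm_add_card_le_of_eq_zero_on_range hY hvY
  exact ⟨v, hv0, by omega⟩

lemma exists_det_submatrix_eq_zero_of_hammingNorm_add_le (M : Matrix ι κ F)
    {v : ι → F} (hv0 : v ≠ 0)
    (hle : hammingNorm v + hammingNorm (v ᵥ* M) ≤ Fintype.card κ) :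
    ∃ (k : ℕ) (X : Fin k → ι) (Y : Fin k → κ),
      Injective X ∧ Injective Y ∧ (M.submatrix X Y).det = 0 := by
  have hzeros : hammingNorm v ≤ #{j | (v ᵥ* M) j = 0} := by
    have : #{j | (v ᵥ* M) j = 0} + hammingNorm (v ᵥ* M) = Fintype.card κ := by
      simpa [hammingNorm] using
        card_filter_add_card_filter_not (s := univ) (fun j ↦ (v ᵥ* M) j = 0)
    omega
  obtain ⟨T, hT, hTcard⟩ := exists_subset_card_eq hzeros
  obtain ⟨X, hX, hXrange⟩ :=
    exists_fin_injective_range_eq ({i | v i ≠ 0} : Finset ι) (k := hammingNorm v) rfl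
  obtain ⟨Y, hY, hYrange⟩ := exists_fin_injective_range_eq T hTcard
  refine ⟨_, X, Y, hX, hY,
    (det_submatrix_eq_zero_iff M hX Y).2 ⟨v, hv0, fun i hi ↦ ?_, fun b ↦ ?_⟩⟩
  · by_contra hvi
    exact hi (by simp [hXrange, hvi])
  · have hYb : Y b ∈ (T : Set κ) := hYrange ▸ Set.mem_range_self b
    simpa using hT hYb

end

/-- A linear code `x ↦ x M` satisfies the superconcentrator-induced distance bound
`dist(C x, C y) ≥ m - dist(x,y) + 1` for all distinct `x, y` iff every square
submatrix of the generator matrix `M` is nonsingular. -/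
theorem stmt_11 {F : Type*} [Field F] [DecidableEq F] {n m : ℕ}
    (M : Matrix (Fin n) (Fin m) F) :
    (∀ x y : Fin n → F, x ≠ y →
        (m : ℤ) - hammingDist x y + 1 ≤ hammingDist (Matrix.vecMul x M) (Matrix.vecMul y M)) ↔
    (∀ (k : ℕ) (X : Fin k → Fin n) (Y : Fin k → Fin m),
        Function.Injective X → Function.Injective Y → (M.submatrix X Y).det ≠ 0) := by
  simp only [hammingDist_eq_hammingNorm_sub, ← sub_vecMul]
  constructor
  · intro hdist k X Y hX hY hdet
    obtain ⟨v, hv0, hle⟩ := exists_hammingNorm_add_le_of_det_submatrix_eq_zero M hX hY hdet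
    have hweight := hdist v 0 hv0
    rw [sub_zero] at hweight
    rw [Fintype.card_fin] at hle
    omega
  · intro hdet x y hxy
    by_contra! hlt
    obtain ⟨k, X, Y, hX, hY, h0⟩ :=
      exists_det_submatrix_eq_zero_of_hammingNorm_add_le M (sub_ne_zero.2 hxy)
        (by rw [Fintype.card_fin]; omega)
    exact hdet k X Y hX hY h0
end

section
/- Let F be a finite field and let C : F^n → F^m be a function computed by a circuit whose underlying directed acyclic graph G has n input vertices and m output vertices, where each internal/output gate computes an arbitrary function of its inputs. Suppose C satisfies dist(C(x), C(y)) ≥ m - dist(x,y) + 1 for all distinct x, y ∈ F^n. Then G is an (n, m)-superconcentrator: for every pair of equal-size subsets X of inputs and Y of outputs, there exist |X| vertex-disjoint paths from X to Y. -/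
/-- `p` is a (nonempty) directed path from `a` to `b` in the digraph with edge relation `E`. -/
def IsPathFromTo {V : Type*} (E : V → V → Prop) (p : List V) (a b : V) : Prop :=
  p.Chain' E ∧ p.head? = some a ∧ p.getLast? = some b

/-- There is a family of pairwise vertex-disjoint directed paths, one starting at each
vertex of `S`, each ending at a vertex of `T`.  (Disjointness forces the endpoints to be
`|S|` distinct vertices of `T`.) -/
def HasDisjointPathFamily {V : Type*} (E : V → V → Prop) (S T : Finset V) : Prop :=
  ∃ P : V → List V,
    (∀ s ∈ S, ∃ t ∈ T, IsPathFromTo E (P s) s t) ∧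
    (∀ s ∈ S, ∀ s' ∈ S, s ≠ s' → ∀ v, v ∈ P s → v ∉ P s')

/-!
If the paths do not exist, Menger's theorem gives a set `S` of fewer than `|X|` vertices meeting
every path from `X` to `Y`. As `|F|^|S| < |F|^|X|`, two distinct inputs `x ≠ y` that agree
outside `X` induce the same values on `S`. By well-founded induction along the acyclic graph,
every vertex all of whose paths from `X` pass through `S` then carries the same value under `x`
and `y`; in particular so does every output in `Y`. Hence `dist(C x, C y) ≤ m - |Y|` while
`dist(x, y) ≤ |X| = |Y|`, contradicting the distance bound.

Menger's theorem is proved by induction on the number of edges (Göring's argument). Delete an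
edge `uv`. Either all separators stay large, or a separator `S` with `|S| < |X|` appears; then
`S ∪ {u}` and `S ∪ {v}` are minimum separators of the full graph, and disjoint paths
`X → S ∪ {u}` and `S ∪ {v} → Y` avoiding `uv` can only meet in `S`, so they join through `S`
and the edge `uv` into disjoint paths `X → Y`.
-/

namespace List

variable {α : Type*}

theorem exists_eq_append_cons_of_exists_first {l : List α} {p : α → Prop} (h : ∃ a ∈ l, p a) :
    ∃ l₁ a l₂, l = l₁ ++ a :: l₂ ∧ p a ∧ ∀ b ∈ l₁, ¬ p b := by
  classical
  obtain ⟨a, ha⟩ := Option.isSome_iff_exists.1 (find?_isSome (p := fun a => decide (p a)).2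
    (by simpa using h))
  obtain ⟨hpa, l₁, l₂, rfl, hl₁⟩ := find?_eq_some_iff_append.1 ha
  exact ⟨l₁, a, l₂, rfl, by simpa using hpa, fun b hb => by simpa using hl₁ b hb⟩

theorem exists_eq_append_cons_of_exists_last {l : List α} {p : α → Prop} (h : ∃ a ∈ l, p a) :
    ∃ l₁ a l₂, l = l₁ ++ a :: l₂ ∧ p a ∧ ∀ b ∈ l₂, ¬ p b := by
  obtain ⟨l₁, a, l₂, hl, hpa, hl₁⟩ :=
    exists_eq_append_cons_of_exists_first (l := l.reverse) (by simpa using h)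
  refine ⟨l₂.reverse, a, l₁.reverse, ?_, hpa, by simpa using hl₁⟩
  simpa using congrArg reverse hl

theorem mem_tail_append_cons {l₁ l₂ : List α} {a b : α} (hb : b ∈ l₂) :
    b ∈ (l₁ ++ a :: l₂).tail := by
  cases l₁ <;> simp [hb]

theorem isChain_or_mem_of_forall_imp {R R' : α → α → Prop} {a b : α}
    (hR : ∀ x y, R x y → R' x y ∨ x = a ∧ y = b) {l : List α} (hl : IsChain R l) :
    IsChain R' l ∨ a ∈ l.dropLast ∧ b ∈ l.tail := by
  refine or_iff_not_imp_right.2 fun h => isChain_iff_forall_rel_of_append_cons_cons.2 ?_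
  intro x y l₁ l₂ hl'
  rcases hR x y (isChain_iff_forall_rel_of_append_cons_cons.1 hl hl') with hxy | ⟨rfl, rfl⟩
  · exact hxy
  · subst hl'
    exact absurd ⟨by simp, mem_tail_append_cons (by simp)⟩ h

end List

section Paths

variable {V : Type*} {E E' : V → V → Prop} {p l₁ l₂ : List V} {a b c w : V}

namespace IsPathFromTo

theorem mono (h : ∀ x y, E x y → E' x y) (hp : IsPathFromTo E p a b) : IsPathFromTo E' p a b :=
  ⟨hp.1.imp h, hp.2⟩

theorem singleton (a : V) : IsPathFromTo E [a] a a :=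
  ⟨List.isChain_singleton a, rfl, rfl⟩

theorem start_mem (hp : IsPathFromTo E p a b) : a ∈ p :=
  List.mem_of_mem_head? hp.2.1

theorem end_mem (hp : IsPathFromTo E p a b) : b ∈ p :=
  List.mem_of_mem_getLast? hp.2.2

theorem append {q : List V} {d : V} (hp : IsPathFromTo E p a b) (hq : IsPathFromTo E q c d)
    (hbc : E b c) : IsPathFromTo E (p ++ q) a d := by
  obtain ⟨hpc, hph, hpl⟩ := hp
  obtain ⟨hqc, hqh, hql⟩ := hq
  refine ⟨List.isChain_append.2 ⟨hpc, hqc, by simp [hpl, hqh, hbc]⟩, ?_, ?_⟩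
  · rw [List.head?_append, hph]; rfl
  · rw [List.getLast?_append, hql]; rfl

theorem eq_of_forall_not (hE : ∀ x y, ¬ E x y) (hp : IsPathFromTo E p a b) : a = b := by
  obtain ⟨hc, hh, hl⟩ := hp
  match p, hc with
  | [x], _ => simp_all
  | x :: y :: _, hc => exact absurd (List.isChain_cons_cons.1 hc).1 (hE x y)

end IsPathFromTo

theorem isPathFromTo_append_cons :
    IsPathFromTo E (l₁ ++ w :: l₂) a b ↔
      IsPathFromTo E (l₁ ++ [w]) a w ∧ IsPathFromTo E (w :: l₂) w b := by
  have hhead : (l₁ ++ w :: l₂).head? = (l₁ ++ [w]).head? := by cases l₁ <;> rfl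
  have hlast : (l₁ ++ w :: l₂).getLast? = (w :: l₂).getLast? :=
    List.getLast?_append_of_ne_nil _ (List.cons_ne_nil w l₂)
  rw [IsPathFromTo, IsPathFromTo, IsPathFromTo, List.Chain', List.isChain_split, hhead, hlast]
  simp only [List.getLast?_concat, List.head?_cons]
  tauto

def Separates (E : V → V → Prop) (X Y S : Finset V) : Prop :=
  ∀ p a b, a ∈ X → b ∈ Y → IsPathFromTo E p a b → ∃ s ∈ p, s ∈ S

def PairwiseVertexDisjoint (X : Finset V) (P : V → List V) : Prop :=
  ∀ x ∈ X, ∀ x' ∈ X, x ≠ x' → ∀ v, v ∈ P x → v ∉ P x'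

theorem PairwiseVertexDisjoint.mono {X : Finset V} {P Q : V → List V}
    (hP : PairwiseVertexDisjoint X P) (h : ∀ x ∈ X, ∀ v ∈ Q x, v ∈ P x) :
    PairwiseVertexDisjoint X Q :=
  fun x hx x' hx' hne v hv hv' => hP x hx x' hx' hne v (h x hx v hv) (h x' hx' v hv')

theorem HasDisjointPathFamily.mono {X Y : Finset V} (h : ∀ x y, E x y → E' x y)
    (hP : HasDisjointPathFamily E X Y) : HasDisjointPathFamily E' X Y :=
  let ⟨P, hP, hd⟩ := hP
  ⟨P, fun x hx => (hP x hx).imp fun _ ⟨hy, hp⟩ => ⟨hy, hp.mono h⟩, hd⟩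

theorem hasDisjointPathFamily_of_subset {X Y : Finset V} (h : X ⊆ Y) :
    HasDisjointPathFamily E X Y :=
  ⟨fun x => [x], fun x hx => ⟨x, h hx, .singleton x⟩, by simp⟩

variable {X Y S T A B : Finset V} {u v : V}

theorem Separates.of_subset_right {Y' : Finset V} (hY : Y' ⊆ Y) (hS : Separates E X Y S) :
    Separates E X Y' S :=
  fun p a b ha hb hp => hS p a b ha (hY hb) hp

theorem Separates.of_edge (h : Separates E X {v} S) (huv : E u v) (hv : v ∉ S) :
    Separates E X {u} S := by
  intro p a b ha hb hp
  rw [Finset.mem_singleton] at hb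
  subst hb
  obtain ⟨s, hs, hsS⟩ := h _ a v ha (Finset.mem_singleton_self v) (hp.append (.singleton v) huv)
  rcases List.mem_append.1 hs with hs | hs
  · exact ⟨s, hs, hsS⟩
  · exact absurd (List.mem_singleton.1 hs ▸ hsS) hv

theorem Separates.trans_of_mem_left (hE : ∀ x y, E x y → E' x y ∨ x = u ∧ y = v)
    (hA : Separates E X Y A) (hu : u ∈ A) (hT : Separates E' X A T) : Separates E X Y T := by
  intro p a b ha hb hp
  obtain ⟨l₁, c, l₂, rfl, hc, hl₁⟩ := List.exists_eq_append_cons_of_exists_first (hA p a b ha hb hp)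
  have hpre := (isPathFromTo_append_cons.1 hp).1
  rcases List.isChain_or_mem_of_forall_imp hE hpre.1 with hpre' | ⟨hu', -⟩
  · obtain ⟨t, ht, htT⟩ := hT _ a c ha hc ⟨hpre', hpre.2⟩
    exact ⟨t, by simp only [List.mem_append, List.mem_cons] at ht ⊢; tauto, htT⟩
  · exact absurd hu (hl₁ u (by simpa using hu'))

theorem Separates.trans_of_mem_right (hE : ∀ x y, E x y → E' x y ∨ x = u ∧ y = v)
    (hB : Separates E X Y B) (hv : v ∈ B) (hT : Separates E' B Y T) : Separates E X Y T := by
  intro p a b ha hb hp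
  obtain ⟨l₁, c, l₂, rfl, hc, hl₂⟩ := List.exists_eq_append_cons_of_exists_last (hB p a b ha hb hp)
  have hsuf := (isPathFromTo_append_cons.1 hp).2
  rcases List.isChain_or_mem_of_forall_imp hE hsuf.1 with hsuf' | ⟨-, hv'⟩
  · obtain ⟨t, ht, htT⟩ := hT _ c b hc hb ⟨hsuf', hsuf.2⟩
    exact ⟨t, List.mem_append_right _ ht, htT⟩
  · exact absurd hv (hl₂ v hv')

theorem HasDisjointPathFamily.exists_first_hit (h : HasDisjointPathFamily E X A) :
    ∃ (L : V → List V) (a : V → V),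
      (∀ x ∈ X, a x ∈ A ∧ IsPathFromTo E (L x ++ [a x]) x (a x) ∧ ∀ z ∈ L x, z ∉ A) ∧
      PairwiseVertexDisjoint X fun x => L x ++ [a x] := by
  obtain ⟨P, hP, hd⟩ := h
  have key : ∀ x ∈ X, ∃ l c, (∀ z ∈ l ++ [c], z ∈ P x) ∧
      c ∈ A ∧ IsPathFromTo E (l ++ [c]) x c ∧ ∀ z ∈ l, z ∉ A := by
    intro x hx
    obtain ⟨c₀, hc₀, hp⟩ := hP x hx
    obtain ⟨l₁, c, l₂, hPx, hc, hl₁⟩ :=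
      List.exists_eq_append_cons_of_exists_first ⟨c₀, hp.end_mem, hc₀⟩
    rw [hPx] at hp ⊢
    refine ⟨l₁, c, fun z hz => ?_, hc, (isPathFromTo_append_cons.1 hp).1, hl₁⟩
    simp only [List.mem_append, List.mem_cons] at hz ⊢
    tauto
  choose! L a hsub ha hpath hL using key
  exact ⟨L, a, fun x hx => ⟨ha x hx, hpath x hx, hL x hx⟩, PairwiseVertexDisjoint.mono hd hsub⟩

theorem HasDisjointPathFamily.exists_last_visit (h : HasDisjointPathFamily E B Y) :
    ∃ M : V → List V,
      (∀ b ∈ B, (∃ y ∈ Y, IsPathFromTo E (b :: M b) b y) ∧ ∀ z ∈ M b, z ∉ B) ∧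
      PairwiseVertexDisjoint B fun b => b :: M b := by
  obtain ⟨Q, hQ, hd⟩ := h
  have key : ∀ b ∈ B, ∃ m, (∀ z ∈ b :: m, z ∈ Q b) ∧
      (∃ y ∈ Y, IsPathFromTo E (b :: m) b y) ∧ ∀ z ∈ m, z ∉ B := by
    intro b hb
    obtain ⟨y, hy, hp⟩ := hQ b hb
    obtain ⟨l₁, b', l₂, hQb, rfl, hl₂⟩ :=
      List.exists_eq_append_cons_of_exists_last (p := (· = b)) ⟨b, hp.start_mem, rfl⟩
    rw [hQb] at hp
    refine ⟨l₂, fun z hz => hQb ▸ List.mem_append_right _ hz,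
      ⟨y, hy, (isPathFromTo_append_cons.1 hp).2⟩, fun z hz hzB => ?_⟩
    -- every other vertex of `B` starts its own path, so it cannot lie on `Q b`
    obtain ⟨_, _, hz'⟩ := hQ z hzB
    exact hd z hzB b' hb (hl₂ z hz) z hz'.start_mem
      (hQb ▸ List.mem_append_right _ (List.mem_cons_of_mem _ hz))
  choose! M hsub hpath hM using key
  exact ⟨M, fun b hb => ⟨hpath b hb, hM b hb⟩, PairwiseVertexDisjoint.mono hd hsub⟩

theorem Separates.eq_and_mem_of_mem_of_mem (hS : Separates E X Y S) {x y c d w : V}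
    {l m : List V} (hx : x ∈ X) (hy : y ∈ Y) (hp : IsPathFromTo E (l ++ [c]) x c)
    (hl : ∀ z ∈ l, z ∉ S) (hq : IsPathFromTo E (d :: m) d y) (hm : ∀ z ∈ m, z ∉ S)
    (hwp : w ∈ l ++ [c]) (hwq : w ∈ d :: m) : c = d ∧ c ∈ S := by
  -- The first path up to `w` followed by the second from `w` runs from `X` to `Y`, and can
  -- meet `S` only at `w`.
  obtain ⟨l₁, l₂, hsplit⟩ := List.append_of_mem hwp
  obtain ⟨m₁, m₂, hsplit'⟩ := List.append_of_mem hwq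
  have hl₁ : ∀ z ∈ l₁, z ∈ l := fun z hz => by
    have : l = l₁ ++ (w :: l₂).dropLast := by simpa using congrArg List.dropLast hsplit
    exact this ▸ List.mem_append_left _ hz
  have hm₂ : ∀ z ∈ m₂, z ∈ m := fun z hz => by
    have : m = (m₁ ++ w :: m₂).tail := congrArg List.tail hsplit'
    exact this ▸ List.mem_tail_append_cons hz
  rw [hsplit] at hp
  rw [hsplit'] at hq
  obtain ⟨s, hs, hsS⟩ := hS _ x y hx hy <| isPathFromTo_append_cons.2
    ⟨(isPathFromTo_append_cons.1 hp).1, (isPathFromTo_append_cons.1 hq).2⟩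
  have hwS : w ∈ S := by
    rcases List.mem_append.1 hs with hs | hs
    · exact absurd hsS (hl s (hl₁ s hs))
    · rcases List.mem_cons.1 hs with rfl | hs
      · exact hsS
      · exact absurd hsS (hm s (hm₂ s hs))
  have hwc : w = c := by
    rcases List.mem_append.1 hwp with h | h
    · exact absurd hwS (hl w h)
    · simpa using h
  have hwd : w = d := by
    rcases List.mem_cons.1 hwq with h | h
    · exact h
    · exact absurd hwS (hm w h)
  exact ⟨hwc ▸ hwd, hwc ▸ hwS⟩

theorem hasDisjointPathFamily_of_cover {P Q : V → List V} {τ : V → V}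
    (hP : PairwiseVertexDisjoint X P) (hQ : PairwiseVertexDisjoint B Q)
    (hτ : ∀ x ∈ X, τ x ∈ B) (hτinj : Set.InjOn τ X)
    (hcross : ∀ x ∈ X, ∀ x' ∈ X, ∀ z ∈ P x, z ∈ Q (τ x') → x = x')
    (hR : ∀ x ∈ X, ∃ r, ∃ y ∈ Y, IsPathFromTo E r x y ∧ ∀ z ∈ r, z ∈ P x ∨ z ∈ Q (τ x)) :
    HasDisjointPathFamily E X Y := by
  choose! R y hy hR hRPQ using hR
  refine ⟨R, fun x hx => ⟨y x, hy x hx, hR x hx⟩, fun x hx x' hx' hne z hz hz' => ?_⟩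
  rcases hRPQ x hx z hz with h | h <;> rcases hRPQ x' hx' z hz' with h' | h'
  · exact hP x hx x' hx' hne z h h'
  · exact hne (hcross x hx x' hx' z h h')
  · exact hne (hcross x' hx' x hx z h' h).symm
  · exact hQ _ (hτ x hx) _ (hτ x' hx') (fun h'' => hne (hτinj hx hx' h'')) z h h'

section DecidableEq

variable [DecidableEq V]

theorem Separates.insert_of_forall_imp (hE : ∀ x y, E x y → E' x y ∨ x = u ∧ y = v)
    (hS : Separates E' X Y S) :
    Separates E X Y (insert u S) ∧ Separates E X Y (insert v S) := by
  have key : ∀ p a b, a ∈ X → b ∈ Y → IsPathFromTo E p a b → (∃ s ∈ p, s ∈ S) ∨ u ∈ p ∧ v ∈ p :=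
    fun p a b ha hb hp => (List.isChain_or_mem_of_forall_imp hE hp.1).imp
      (fun hp' => hS p a b ha hb ⟨hp', hp.2⟩)
      (fun h => ⟨List.dropLast_subset _ h.1, List.mem_of_mem_tail h.2⟩)
  constructor <;> intro p a b ha hb hp <;> rcases key p a b ha hb hp with ⟨s, hs, hsS⟩ | ⟨hu, hv⟩
  · exact ⟨s, hs, Finset.mem_insert_of_mem hsS⟩
  · exact ⟨u, hu, Finset.mem_insert_self u S⟩
  · exact ⟨s, hs, Finset.mem_insert_of_mem hsS⟩
  · exact ⟨v, hv, Finset.mem_insert_self v S⟩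

theorem Separates.inter_of_forall_not (hE : ∀ x y, ¬ E x y) : Separates E X Y (X ∩ Y) :=
  fun _ a _ ha hb hp => ⟨a, hp.start_mem, Finset.mem_inter.2 ⟨ha, hp.eq_of_forall_not hE ▸ hb⟩⟩

theorem swap_apply_of_mem_insert {c : V} (hv : v ∉ S) (hc : c ∈ insert u S) :
    c = u ∧ Equiv.swap u v c = v ∨ c ∈ S ∧ Equiv.swap u v c = c := by
  by_cases hcu : c = u
  · exact .inl ⟨hcu, hcu ▸ Equiv.swap_apply_left c v⟩
  · have hcS := (Finset.mem_insert.1 hc).resolve_left hcu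
    exact .inr ⟨hcS, Equiv.swap_apply_of_ne_of_ne hcu (ne_of_mem_of_not_mem hcS hv)⟩

theorem HasDisjointPathFamily.of_insert_edge (hE : ∀ x y, E x y ↔ E' x y ∨ x = u ∧ y = v)
    (hS : Separates E' X Y S) (hv : v ∉ S) (hXA : HasDisjointPathFamily E' X (insert u S))
    (hBY : HasDisjointPathFamily E' (insert v S) Y) : HasDisjointPathFamily E X Y := by
  have hE' : ∀ x y, E' x y → E x y := fun x y h => (hE x y).2 (.inl h)
  obtain ⟨L, a, hP, hPd⟩ := hXA.exists_first_hit
  obtain ⟨M, hQ, hQd⟩ := hBY.exists_last_visit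
  have ha : Set.InjOn a X := fun x hx x' hx' h => by
    by_contra hne
    exact hPd x hx x' hx' hne (a x) (by simp) (by simp [h])
  have hτ (x) (hx : x ∈ X) := swap_apply_of_mem_insert hv (hP x hx).1
  have hτB : ∀ x ∈ X, Equiv.swap u v (a x) ∈ insert v S := fun x hx => by
    rcases hτ x hx with ⟨-, h⟩ | ⟨hS, h⟩ <;> simp [h, hS]
  -- The path ending at `u` continues along the edge `uv` and the path from `v`; a path ending
  -- at `s ∈ S` continues along the path from `s`.
  refine hasDisjointPathFamily_of_cover (τ := Equiv.swap u v ∘ a) hPd hQd hτB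
    ((Equiv.injective _).comp_injOn ha) (fun x hx x' hx' z hz hz' => ?_) (fun x hx => ?_)
  · obtain ⟨⟨y, hy, hq⟩, hM⟩ := hQ _ (hτB x' hx')
    obtain ⟨heq, haS⟩ := hS.eq_and_mem_of_mem_of_mem hx hy (hP x hx).2.1
      (fun z hz hzS => (hP x hx).2.2 z hz (Finset.mem_insert_of_mem hzS)) hq
      (fun z hz hzS => hM z hz (Finset.mem_insert_of_mem hzS)) hz hz'
    rcases hτ x' hx' with ⟨-, h⟩ | ⟨-, h⟩
    · exact absurd (h ▸ heq ▸ haS) hv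
    · exact ha hx hx' (heq.trans h)
  · obtain ⟨⟨y, hy, hq⟩, -⟩ := hQ _ (hτB x hx)
    have hp := (hP x hx).2.1.mono hE'
    simp only [Function.comp_apply] at hq ⊢
    rcases hτ x hx with ⟨hau, h⟩ | ⟨-, h⟩ <;> rw [h] at hq ⊢
    · refine ⟨(L x ++ [a x]) ++ (v :: M v), y, hy, hp.append (hq.mono hE') ?_,
        fun z hz => List.mem_append.1 hz⟩
      exact hau ▸ (hE u v).2 (.inr ⟨rfl, rfl⟩)
    · refine ⟨L x ++ a x :: M (a x), y, hy, isPathFromTo_append_cons.2 ⟨hp, hq.mono hE'⟩,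
        fun z hz => ?_⟩
      simp only [List.mem_append, List.mem_cons] at hz ⊢
      tauto

theorem hasDisjointPathFamily_of_forall_card_le_of_finset (G : Finset (V × V)) (X Y : Finset V)
    (h : ∀ S, Separates (fun a b => (a, b) ∈ G) X Y S → X.card ≤ S.card) :
    HasDisjointPathFamily (fun a b => (a, b) ∈ G) X Y := by
  induction G using Finset.induction_on generalizing X Y with
  | empty =>
    have hXY := h _ (Separates.inter_of_forall_not (by simp))
    exact hasDisjointPathFamily_of_subset
      (Finset.eq_of_subset_of_card_le Finset.inter_subset_left hXY ▸ Finset.inter_subset_right)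
  | insert e G _ ih =>
    obtain ⟨u, v⟩ := e
    have hE : ∀ x y, (x, y) ∈ insert (u, v) G ↔ (x, y) ∈ G ∨ x = u ∧ y = v := by simp [or_comm]
    have hE' : ∀ x y, (x, y) ∈ insert (u, v) G → (x, y) ∈ G ∨ x = u ∧ y = v := fun x y => (hE x y).1
    by_cases hG : ∀ S, Separates (fun a b => (a, b) ∈ G) X Y S → X.card ≤ S.card
    · exact (ih X Y hG).mono fun x y h => (hE x y).2 (.inl h)
    push Not at hG
    obtain ⟨S, hS, hSX⟩ := hG
    obtain ⟨hA, hB⟩ := hS.insert_of_forall_imp hE'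
    have hv : v ∉ S := fun hv => by
      have := h _ hB
      rw [Finset.insert_eq_of_mem hv] at this
      omega
    refine HasDisjointPathFamily.of_insert_edge hE hS hv
      (ih _ _ fun T hT => h T (hA.trans_of_mem_left hE' (Finset.mem_insert_self u S) hT))
      (ih _ _ fun T hT => ?_)
    calc (insert v S).card ≤ S.card + 1 := Finset.card_insert_le v S
      _ ≤ X.card := hSX
      _ ≤ T.card := h T (hB.trans_of_mem_right hE' (Finset.mem_insert_self v S) hT)

end DecidableEq

theorem hasDisjointPathFamily_of_forall_card_le [Fintype V] (E : V → V → Prop)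
    (h : ∀ S, Separates E X Y S → X.card ≤ S.card) : HasDisjointPathFamily E X Y := by
  classical
  have hG : (fun a b => (a, b) ∈ Finset.univ.filter fun e : V × V => E e.1 e.2) = E := by
    ext; simp
  rw [← hG] at h ⊢
  exact hasDisjointPathFamily_of_forall_card_le_of_finset _ X Y h

end Paths

theorem hammingDist_le_card_of_forall_notMem {ι β : Type*} [Fintype ι] [DecidableEq β]
    {x y : ι → β} {s : Finset ι} (h : ∀ i ∉ s, x i = y i) : hammingDist x y ≤ s.card :=
  Finset.card_le_card fun i hi => by_contra fun his => (Finset.mem_filter.1 hi).2 (h i his)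

theorem exists_ne_eqOn_compl_of_card_lt_pow {ι F β : Type*} [Fintype F] [Nontrivial F]
    [Fintype β] (X : Finset ι) (g : (ι → F) → β) (h : Fintype.card β < Fintype.card F ^ X.card) :
    ∃ x y, x ≠ y ∧ (∀ i ∉ X, x i = y i) ∧ g x = g y := by
  classical
  obtain ⟨c⟩ := (inferInstance : Nonempty F)
  let extend : (X → F) → ι → F := fun z i => if hi : i ∈ X then z ⟨i, hi⟩ else c
  have hextend : extend.Injective := fun z z' h => funext fun i => by
    simpa [extend] using congrFun h i
  obtain ⟨z, z', hne, hg⟩ := Fintype.exists_ne_map_eq_of_card_lt (g ∘ extend) (by simpa using h)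
  exact ⟨extend z, extend z', hextend.ne hne, fun i hi => by simp [extend, hi], hg⟩

theorem val_eq_of_separates {F V : Type*} {n : ℕ} {E : V → V → Prop} (hacyclic : WellFounded E)
    {inp : Fin n ↪ V} {val : (Fin n → F) → V → F}
    (hval_inp : ∀ (x : Fin n → F) (i : Fin n), val x (inp i) = x i)
    (hval_gate : ∀ v : V, (∀ i : Fin n, inp i ≠ v) → ∀ x y : Fin n → F,
      (∀ u : V, E u v → val x u = val y u) → val x v = val y v)
    {x y : Fin n → F} {X : Finset (Fin n)} {S : Finset V} (hoff : ∀ i ∉ X, x i = y i)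
    (hS : ∀ s ∈ S, val x s = val y s) (v : V) (hv : Separates E (X.map inp) {v} S) :
    val x v = val y v := by
  induction v using hacyclic.induction with
  | _ v ih =>
    by_cases hvS : v ∈ S
    · exact hS v hvS
    by_cases hinp : ∃ i, inp i = v
    · obtain ⟨i, rfl⟩ := hinp
      rw [hval_inp, hval_inp]
      refine hoff i fun hi => ?_
      obtain ⟨s, hs, hsS⟩ := hv _ _ _ (Finset.mem_map_of_mem _ hi) (Finset.mem_singleton_self _)
        (.singleton (inp i))
      exact hvS (List.mem_singleton.1 hs ▸ hsS)
    · push Not at hinp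
      exact hval_gate v hinp x y fun u hu => ih u hu (hv.of_edge hu hvS)

/-- Any circuit over a finite field, with arbitrary gates, whose underlying DAG has `n`
inputs and `m` outputs and which encodes a code with
`dist(C x, C y) ≥ m - dist(x,y) + 1`, must (as a graph) be an `(n,m)`-superconcentrator. -/
theorem stmt_12 {F V : Type*} [Field F] [Fintype F] [DecidableEq F] [Fintype V]
    {n m : ℕ} (E : V → V → Prop) (hacyclic : WellFounded E)
    (inp : Fin n ↪ V) (out : Fin m ↪ V)
    (val : (Fin n → F) → V → F)
    (hval_inp : ∀ (x : Fin n → F) (i : Fin n), val x (inp i) = x i)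
    (hval_gate : ∀ v : V, (∀ i : Fin n, inp i ≠ v) → ∀ x y : Fin n → F,
      (∀ u : V, E u v → val x u = val y u) → val x v = val y v)
    (C : (Fin n → F) → Fin m → F)
    (hC : ∀ (x : Fin n → F) (j : Fin m), C x j = val x (out j))
    (hdist : ∀ x y : Fin n → F, x ≠ y →
      (m : ℤ) - hammingDist x y + 1 ≤ hammingDist (C x) (C y)) :
    ∀ (X : Finset (Fin n)) (Y : Finset (Fin m)), X.card = Y.card →
      HasDisjointPathFamily E (X.map inp) (Y.map out) := by
  classical
  intro X Y hXY
  by_contra hfam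
  obtain ⟨S, hS, hSX⟩ : ∃ S, Separates E (X.map inp) (Y.map out) S ∧ S.card < X.card := by
    by_contra! h
    exact hfam (hasDisjointPathFamily_of_forall_card_le E fun S hS => by simpa using h S hS)
  obtain ⟨x, y, hxy, hoff, hxyS⟩ := exists_ne_eqOn_compl_of_card_lt_pow X
    (fun x (s : S) => val x s) (by
      rw [Fintype.card_fun, Fintype.card_coe]
      exact Nat.pow_lt_pow_right Fintype.one_lt_card hSX)
  have hCY : ∀ j ∈ Y, C x j = C y j := fun j hj => by
    rw [hC, hC]
    exact val_eq_of_separates hacyclic hval_inp hval_gate hoff (fun s hs => congrFun hxyS ⟨s, hs⟩)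
      _ (hS.of_subset_right (by simpa using hj))
  have h₁ := hdist x y hxy
  have h₂ : hammingDist x y ≤ X.card := hammingDist_le_card_of_forall_notMem hoff
  have h₃ : hammingDist (C x) (C y) ≤ Yᶜ.card :=
    hammingDist_le_card_of_forall_notMem fun j hj => hCY j (by simpa using hj)
  rw [Finset.card_compl, Fintype.card_fin] at h₃
  have h₄ : Y.card ≤ m := by simpa using Y.card_le_univ
  omega
end

section
/- Let G be an (n, m)-superconcentrator of depth d, and form the random linear map C_G : F^n → F^m over a finite field F by replacing each vertex with an addition gate and assigning each edge e an independent uniformly random coefficient r_e ∈ F. Then with probability at least 1 - Σ_{i=1}^n C(n,i)·C(m,i)·(d·i)/|F|, every square submatrix of the resulting generator matrix is nonsingular, i.e., C_G encodes a superconcentrator-induced code. -/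
open scoped Classical

/-- `G` (with edge relation `E`, inputs `inp`, outputs `out`) is an `(n, m)`-superconcentrator:
any equal-size sets of inputs and outputs are joined by that many vertex-disjoint paths. -/
def IsSuperconcentrator {V : Type*} {n m : ℕ} (E : V → V → Prop)
    (inp : Fin n ↪ V) (out : Fin m ↪ V) : Prop :=
  ∀ (X : Finset (Fin n)) (Y : Finset (Fin m)), X.card = Y.card →
    HasDisjointPathFamily E (X.map inp) (Y.map out)

/-- The generator matrix of the linear circuit obtained by putting an addition gate at
each vertex and coefficient `r e` on each edge `e`:
`M i j = Σ_{paths p : inp i → out j} Π_{e ∈ p} r e`. -/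
noncomputable def genMatrix {V F : Type*} [Field F] {n m : ℕ} (E : V → V → Prop)
    (inp : Fin n ↪ V) (out : Fin m ↪ V) (r : V × V → F) : Matrix (Fin n) (Fin m) F :=
  fun i j => ∑ᶠ p ∈ {p : List V | IsPathFromTo E p (inp i) (out j)},
    ((p.zip p.tail).map r).prod

/-!
Each entry of the generator matrix is the evaluation at the edge coefficients of a polynomial of
degree at most `d`, since a path has at most `d` edges; hence every `k × k` minor is the evaluation
of a polynomial of degree at most `k d`. This polynomial is nonzero: the superconcentrator joins the
`k` rows to the `k` columns by vertex-disjoint paths, and putting coefficient `1` on their edges and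
`0` elsewhere turns the minor into the determinant of a permutation matrix, because inside these
edges the only path leaving an input is its own. By Schwartz–Zippel the minor vanishes with
probability at most `k d / |F|`, and a union bound over the `C(n,k) C(m,k)` choices of rows and
columns gives the estimate.
-/

open Finset Function

theorem MvPolynomial.card_zeros_div_le {σ F : Type*} [Fintype σ] [DecidableEq σ] [Field F]
    [Fintype F] {p : MvPolynomial σ F} (hp : p ≠ 0) :
    (#{r : σ → F | MvPolynomial.eval r p = 0} : ℝ) / Fintype.card (σ → F) ≤
      p.totalDegree / Fintype.card F := by
  set e := Fintype.equivFin σ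
  set q := MvPolynomial.rename e p
  have hq : q ≠ 0 := (map_ne_zero_iff _ (MvPolynomial.rename_injective _ e.injective)).2 hp
  have hzeros : #{r : σ → F | MvPolynomial.eval r p = 0} =
      #{s : Fin (Fintype.card σ) → F | MvPolynomial.eval s q = 0} :=
    card_equiv (e.arrowCongr (Equiv.refl F)) fun r => by
      simp [q, MvPolynomial.eval_rename, Function.comp_def]
  have h := MvPolynomial.schwartz_zippel_totalDegree hq (univ : Finset F)
  rw [Fintype.piFinset_univ, card_univ] at h
  have h' := NNRat.cast_le (K := ℝ) |>.2 h
  push_cast at h'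
  rw [hzeros, Fintype.card_fun]
  push_cast
  refine h'.trans ?_
  gcongr
  exact MvPolynomial.totalDegree_rename_le _ _

theorem Matrix.det_submatrix_perm_eq_zero_iff {k R : Type*} [Fintype k] [DecidableEq k]
    [CommRing R] (A : Matrix k k R) (σ τ : Equiv.Perm k) :
    (A.submatrix σ τ).det = 0 ↔ A.det = 0 := by
  rw [show A.submatrix σ τ = (A.submatrix id τ).submatrix σ id from rfl, det_permute,
    det_permute']
  rcases Int.units_eq_one_or (Equiv.Perm.sign σ) with hσ | hσ <;>
    rcases Int.units_eq_one_or (Equiv.Perm.sign τ) with hτ | hτ <;> simp [hσ, hτ]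

theorem MvPolynomial.totalDegree_det_le {ι σ R : Type*} [Fintype ι] [DecidableEq ι]
    [CommRing R] {A : Matrix ι ι (MvPolynomial σ R)} {d : ℕ}
    (hA : ∀ i j, (A i j).totalDegree ≤ d) : A.det.totalDegree ≤ Fintype.card ι * d := by
  rw [Matrix.det_apply]
  refine (totalDegree_finsetSum _ _).trans (Finset.sup_le fun τ _ => ?_)
  refine (totalDegree_smul_le _ _).trans ((totalDegree_finsetProd _ _).trans ?_)
  simpa using Finset.sum_le_sum fun i (_ : i ∈ Finset.univ) => hA (τ i) i

theorem exists_perm_eq_comp_of_range_eq {ι α : Type*} {X X₀ : ι → α}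
    (hX : Injective X) (hX₀ : Injective X₀) (h : Set.range X = Set.range X₀) :
    ∃ σ : Equiv.Perm ι, X = X₀ ∘ σ :=
  ⟨(Equiv.ofInjective X hX).trans ((Equiv.setCongr h).trans (Equiv.ofInjective X₀ hX₀).symm),
    funext fun a => by simp [Equiv.apply_ofInjective_symm]⟩

theorem finsum_mem_eq_single {α M : Type*} [AddCommMonoid M] (f : α → M) {s : Set α} {a : α}
    (ha : a ∈ s) (hf : ∀ x ∈ s, x ≠ a → f x = 0) : ∑ᶠ x ∈ s, f x = f a := by
  rw [finsum_mem_inter_support_eq f s {a}, finsum_mem_singleton]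
  ext x
  simp only [Set.mem_inter_iff, Set.mem_singleton_iff, Function.mem_support]
  exact ⟨fun ⟨hx, hfx⟩ => ⟨by_contra fun h => hfx (hf x hx h), hfx⟩,
    fun ⟨hx, hfx⟩ => ⟨hx ▸ ha, hfx⟩⟩

namespace List

variable {α : Type*}

theorem isPrefix_of_forall_zip_tail_mem {S : Set (α × α)} {p L : List α} (hL : L.Nodup)
    (hS : ∀ u w, (u, w) ∈ S → u ∈ L → (u, w) ∈ L.zip L.tail)
    (hp : ∀ e ∈ p.zip p.tail, e ∈ S) (hhead : p.head? = L.head?) : p <+: L := by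
  induction p generalizing L with
  | nil => exact nil_prefix
  | cons a q ih =>
    obtain ⟨x, L, rfl⟩ := exists_cons_of_ne_nil (l := L) (by rintro rfl; simp at hhead)
    obtain rfl : a = x := by simpa using hhead
    cases q with
    | nil => simp
    | cons b q =>
      have hab : (a, b) ∈ (a :: L).zip L := hS a b (hp _ (by simp)) mem_cons_self
      obtain ⟨c, L, rfl⟩ := exists_cons_of_ne_nil (l := L) (by rintro rfl; simp at hab)
      have ha : a ∉ c :: L := (nodup_cons.1 hL).1
      obtain rfl : b = c := by
        simp only [zip_cons_cons, mem_cons, Prod.mk.injEq, true_and] at hab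
        exact hab.resolve_right fun h => ha (of_mem_zip h).1
      refine cons_prefix_cons.2 ⟨rfl, ih (nodup_cons.1 hL).2 (fun u w huw hu => ?_)
        (fun e he => hp e (by simp_all)) rfl⟩
      have := hS u w huw (mem_cons_of_mem _ hu)
      simp only [tail_cons, zip_cons_cons, mem_cons, Prod.mk.injEq] at this ⊢
      exact this.resolve_left fun h => ha (h.1 ▸ hu)

theorem IsPrefix.eq_of_getLast?_eq {p L : List α} (h : p <+: L) (hL : L.Nodup)
    (hlast : p.getLast? = L.getLast?) : p = L := by
  obtain ⟨s, rfl⟩ := h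
  obtain rfl | ⟨s, x, rfl⟩ := eq_nil_or_concat s
  · simp
  · have hx : x ∈ p := mem_of_getLast? (by simpa using hlast)
    simp [← append_assoc, nodup_append] at hL
    exact absurd rfl (hL.2 x (.inl hx))

theorem prod_map_indicator_one {α M₀ : Type*} [MonoidWithZero M₀] (S : Set α) (l : List α) :
    (l.map (S.indicator 1)).prod = if ∀ e ∈ l, e ∈ S then (1 : M₀) else 0 := by
  induction l with
  | nil => simp
  | cons x l ih => by_cases hx : x ∈ S <;> simp [hx, ih]

end List

section Paths

variable {V : Type*} {E : V → V → Prop}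

theorem isPathFromTo_iff {p : List V} {a b : V} :
    IsPathFromTo E p a b ↔ p.IsChain E ∧ p.head? = some a ∧ p.getLast? = some b :=
  Iff.rfl

theorem IsPathFromTo.exists_nodup {p : List V} {a b : V} (h : IsPathFromTo E p a b) :
    ∃ q, IsPathFromTo E q a b ∧ q.Nodup ∧ q ⊆ p := by
  induction p generalizing a with
  | nil => simp [isPathFromTo_iff] at h
  | cons x q ih =>
    obtain ⟨hc, hh, hl⟩ := isPathFromTo_iff.1 h
    obtain rfl : x = a := by simpa using hh
    cases q with
    | nil => exact ⟨[x], h, List.nodup_singleton x, List.Subset.refl _⟩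
    | cons y q =>
      obtain ⟨q', hq', hnd, hsub⟩ :=
        ih (a := y) (isPathFromTo_iff.2 ⟨hc.tail, rfl, by simpa using hl⟩)
      obtain ⟨hc', hh', hl'⟩ := isPathFromTo_iff.1 hq'
      by_cases hx : x ∈ q'
      · obtain ⟨s, t, rfl⟩ := List.append_of_mem hx
        refine ⟨x :: t, isPathFromTo_iff.2 ⟨hc'.suffix (List.suffix_append _ _), rfl, ?_⟩,
          hnd.sublist (List.sublist_append_right _ _), fun v hv => ?_⟩
        · simpa using hl'
        · exact List.mem_cons_of_mem _ (hsub (List.mem_append_right _ hv))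
      · refine ⟨x :: q', isPathFromTo_iff.2 ⟨?_, rfl, ?_⟩, List.nodup_cons.2 ⟨hx, hnd⟩,
          List.cons_subset_cons _ hsub⟩
        · refine hc'.cons fun z hz => ?_
          obtain rfl : y = z := by simpa [hh'] using hz
          exact List.rel_of_isChain_cons_cons hc
        · cases q' <;> simp_all

end Paths

def pathEdges {ι V : Type*} (L : ι → List V) : Set (V × V) :=
  {e | ∃ a, e ∈ (L a).zip (L a).tail}

section DisjointPaths

variable {V : Type*} {E : V → V → Prop} {n m k : ℕ} {inp : Fin n ↪ V} {out : Fin m ↪ V}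
  {X : Fin k → Fin n} {Y : Fin k → Fin m}

theorem IsSuperconcentrator.exists_disjoint_nodup_paths (hsc : IsSuperconcentrator E inp out)
    (hX : Injective X) (hY : Injective Y) :
    ∃ (σ : Equiv.Perm (Fin k)) (L : Fin k → List V),
      (∀ a, IsPathFromTo E (L a) (inp (X a)) (out (Y (σ a)))) ∧ (∀ a, (L a).Nodup) ∧
        Pairwise (List.Disjoint on L) := by
  obtain ⟨P, hPpath, hPdisj⟩ := hsc (Finset.univ.image X) (Finset.univ.image Y) (by
    rw [Finset.card_image_of_injective _ hX, Finset.card_image_of_injective _ hY])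
  have hmem (a : Fin k) : inp (X a) ∈ (Finset.univ.image X).map inp := by simp
  have hpath (a : Fin k) : ∃ c L, IsPathFromTo E L (inp (X a)) (out (Y c)) ∧ L.Nodup ∧
      L ⊆ P (inp (X a)) := by
    obtain ⟨t, ht, hpt⟩ := hPpath _ (hmem a)
    obtain ⟨c, rfl⟩ : ∃ c, out (Y c) = t := by simpa using ht
    exact ⟨c, hpt.exists_nodup⟩
  choose σ L hL hnodup hsub using hpath
  have hdisj : Pairwise (List.Disjoint on L) := fun a a' hne v hv hv' =>
    hPdisj _ (hmem a) _ (hmem a') (fun h => hne (hX (inp.injective h))) v (hsub a hv)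
      (hsub a' hv')
  have hσ : Injective σ := fun a a' h => by_contra fun hne =>
    hdisj hne (List.mem_of_getLast? (hL a).2.2)
      (h ▸ List.mem_of_getLast? (hL a').2.2 : out (Y (σ a)) ∈ L a')
  exact ⟨Equiv.ofBijective σ hσ.bijective_of_finite, L, hL, hnodup, hdisj⟩

variable {σ : Equiv.Perm (Fin k)} {L : Fin k → List V}

theorem eq_of_isPathFromTo_of_forall_zip_tail_mem
    (hL : ∀ a, IsPathFromTo E (L a) (inp (X a)) (out (Y (σ a)))) (hnodup : ∀ a, (L a).Nodup)
    (hdisj : Pairwise (List.Disjoint on L)) {a c : Fin k} {p : List V}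
    (hp : IsPathFromTo E p (inp (X a)) (out (Y c)))
    (hedges : ∀ e ∈ p.zip p.tail, e ∈ pathEdges L) :
    p = L a ∧ σ a = c := by
  have hprefix : p <+: L a := by
    refine List.isPrefix_of_forall_zip_tail_mem (hnodup a) ?_ hedges (by rw [hp.2.1, (hL a).2.1])
    -- by disjointness, a chosen edge leaving a vertex of `L a` is an edge of `L a`
    rintro u w ⟨a', he⟩ hu
    obtain rfl : a' = a := by_contra fun hne => hdisj hne (List.of_mem_zip he).1 hu
    exact he
  have hc : σ a = c := by
    have hend : out (Y c) ∈ L (σ.symm c) := by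
      simpa using List.mem_of_getLast? (hL (σ.symm c)).2.2
    obtain rfl : a = σ.symm c := by_contra fun hne =>
      hdisj hne (hprefix.subset (List.mem_of_getLast? hp.2.2)) hend
    simp
  refine ⟨hprefix.eq_of_getLast?_eq (hnodup a) ?_, hc⟩
  rw [hp.2.2, (hL a).2.2, hc]

theorem genMatrix_indicator_submatrix {F : Type*} [Field F]
    (hL : ∀ a, IsPathFromTo E (L a) (inp (X a)) (out (Y (σ a)))) (hnodup : ∀ a, (L a).Nodup)
    (hdisj : Pairwise (List.Disjoint on L)) :
    (genMatrix E inp out ((pathEdges L).indicator 1)).submatrix X Y =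
      (1 : Matrix (Fin k) (Fin k) F).submatrix σ id := by
  ext a c
  have hterm : ∀ p ∈ {p | IsPathFromTo E p (inp (X a)) (out (Y c))},
      ((p.zip p.tail).map ((pathEdges L).indicator 1)).prod =
        if p = L a ∧ σ a = c then (1 : F) else 0 := by
    intro p hp
    rw [List.prod_map_indicator_one]
    congr 1
    refine propext ⟨eq_of_isPathFromTo_of_forall_zip_tail_mem hL hnodup hdisj hp, ?_⟩
    rintro ⟨rfl, -⟩ e he
    exact ⟨a, he⟩
  simp only [genMatrix, Matrix.submatrix_apply, id, Matrix.one_apply]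
  rw [finsum_mem_congr rfl hterm]
  split_ifs with hc
  · subst hc
    simp only [and_true]
    rw [finsum_mem_eq_single _ (a := L a) (hL a) fun p _ hp => if_neg hp, if_pos rfl]
  · simp [hc]

end DisjointPaths

theorem finite_setOf_isPathFromTo {V : Type*} [Finite V] {E : V → V → Prop} {d : ℕ}
    (hdepth : ∀ (p : List V) (a b : V), IsPathFromTo E p a b → p.length ≤ d + 1) (a b : V) :
    {p | IsPathFromTo E p a b}.Finite :=
  (List.finite_length_le V (d + 1)).subset fun p hp => hdepth p a b hp

section GenPolyMatrix

variable {V F : Type*} [Field F] {n m d : ℕ} {E : V → V → Prop} {inp : Fin n ↪ V}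
  {out : Fin m ↪ V}

variable (F E inp out) in
/-- The generator matrix with an indeterminate `X e` as the coefficient of each edge `e`. -/
noncomputable def genPolyMatrix : Matrix (Fin n) (Fin m) (MvPolynomial (V × V) F) :=
  Matrix.of fun i j => ∑ᶠ p ∈ {p : List V | IsPathFromTo E p (inp i) (out j)},
    ((p.zip p.tail).map MvPolynomial.X).prod

theorem genPolyMatrix_map_eval (hfin : ∀ a b, {p | IsPathFromTo E p a b}.Finite)
    (r : V × V → F) :
    (genPolyMatrix F E inp out).map (MvPolynomial.eval r) = genMatrix E inp out r := by
  ext i j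
  simp only [genPolyMatrix, genMatrix, Matrix.map_apply, Matrix.of_apply]
  refine ((MvPolynomial.eval r).toAddMonoidHom.map_finsum_mem _ (hfin _ _)).trans ?_
  simp [map_list_prod, Function.comp_def]

theorem totalDegree_genPolyMatrix_le [Finite V]
    (hdepth : ∀ (p : List V) (a b : V), IsPathFromTo E p a b → p.length ≤ d + 1)
    (i : Fin n) (j : Fin m) : (genPolyMatrix F E inp out i j).totalDegree ≤ d := by
  rw [genPolyMatrix, Matrix.of_apply,
    finsum_mem_eq_finite_toFinset_sum _ (finite_setOf_isPathFromTo hdepth _ _)]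
  refine (MvPolynomial.totalDegree_finsetSum _ _).trans (Finset.sup_le fun p hp => ?_)
  refine (MvPolynomial.totalDegree_list_prod _).trans ?_
  have hlen : p.length ≤ d + 1 := hdepth p (inp i) (out j) (by simpa using hp)
  simpa [Function.comp_def, MvPolynomial.totalDegree_X] using hlen

end GenPolyMatrix

section Counting

variable {V F : Type*} [Field F] {n m d k : ℕ} {E : V → V → Prop} {inp : Fin n ↪ V}
  {out : Fin m ↪ V}

theorem eval_det_genPolyMatrix_submatrix (hfin : ∀ a b, {p | IsPathFromTo E p a b}.Finite)
    (r : V × V → F) (X : Fin k → Fin n) (Y : Fin k → Fin m) :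
    MvPolynomial.eval r ((genPolyMatrix F E inp out).submatrix X Y).det =
      ((genMatrix E inp out r).submatrix X Y).det := by
  rw [RingHom.map_det, RingHom.mapMatrix_apply, ← Matrix.submatrix_map,
    genPolyMatrix_map_eval hfin]

theorem det_genPolyMatrix_submatrix_ne_zero (hsc : IsSuperconcentrator E inp out)
    (hfin : ∀ a b, {p | IsPathFromTo E p a b}.Finite) {X : Fin k → Fin n} {Y : Fin k → Fin m}
    (hX : Injective X) (hY : Injective Y) :
    ((genPolyMatrix F E inp out).submatrix X Y).det ≠ 0 := by
  obtain ⟨σ, L, hL, hnodup, hdisj⟩ := hsc.exists_disjoint_nodup_paths hX hY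
  intro h
  have := congrArg (MvPolynomial.eval ((pathEdges L).indicator 1)) h
  rw [eval_det_genPolyMatrix_submatrix hfin, map_zero,
    genMatrix_indicator_submatrix hL hnodup hdisj, Matrix.det_permute, Matrix.det_one,
    mul_one] at this
  rcases Int.units_eq_one_or (Equiv.Perm.sign σ) with hσ | hσ <;> simp [hσ] at this

variable (E inp out) in
def HasSingularMinorOn (r : V × V → F) (A : Finset (Fin n)) (B : Finset (Fin m)) : Prop :=
  ∃ (k : ℕ) (X : Fin k → Fin n) (Y : Fin k → Fin m), Injective X ∧ Injective Y ∧
    Set.range X = A ∧ Set.range Y = B ∧ ((genMatrix E inp out r).submatrix X Y).det = 0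

variable [Fintype F] [Fintype V]

theorem card_hasSingularMinorOn_div_le (hsc : IsSuperconcentrator E inp out)
    (hdepth : ∀ (p : List V) (a b : V), IsPathFromTo E p a b → p.length ≤ d + 1)
    {A : Finset (Fin n)} {B : Finset (Fin m)} (hAB : #A = #B) :
    (#{r : V × V → F | HasSingularMinorOn E inp out r A B} : ℝ) /
        Fintype.card (V × V → F) ≤
      #A * d / Fintype.card F := by
  have hfin := finite_setOf_isPathFromTo hdepth
  set X₀ := A.orderEmbOfFin rfl
  set Y₀ := B.orderEmbOfFin hAB.symm
  set Q := ((genPolyMatrix F E inp out).submatrix X₀ Y₀).det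
  have hzero (r : V × V → F) (hr : HasSingularMinorOn E inp out r A B) :
      MvPolynomial.eval r Q = 0 := by
    obtain ⟨k, X, Y, hX, hY, hXA, hYB, hdet⟩ := hr
    obtain rfl : k = #A := by simpa [Set.ncard_range_of_injective hX] using congrArg Set.ncard hXA
    obtain ⟨σ, rfl⟩ := exists_perm_eq_comp_of_range_eq hX X₀.injective (by simp [X₀, hXA])
    obtain ⟨τ, rfl⟩ := exists_perm_eq_comp_of_range_eq hY Y₀.injective (by simp [Y₀, hYB])
    rwa [eval_det_genPolyMatrix_submatrix hfin, ← Matrix.det_submatrix_perm_eq_zero_iff _ σ τ]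
  have hdeg : Q.totalDegree ≤ #A * d := by
    simpa using MvPolynomial.totalDegree_det_le
      (A := (genPolyMatrix F E inp out).submatrix X₀ Y₀) fun i j =>
        totalDegree_genPolyMatrix_le hdepth _ _
  calc _ ≤ (#{r : V × V → F | MvPolynomial.eval r Q = 0} : ℝ) /
          Fintype.card (V × V → F) := by
        gcongr with r
        exact hzero r
    _ ≤ Q.totalDegree / Fintype.card F := MvPolynomial.card_zeros_div_le
        (det_genPolyMatrix_submatrix_ne_zero hsc hfin X₀.injective Y₀.injective)
    _ ≤ #A * d / Fintype.card F := by gcongr; exact_mod_cast hdeg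

theorem card_not_forall_det_ne_zero_div_le (hsc : IsSuperconcentrator E inp out)
    (hdepth : ∀ (p : List V) (a b : V), IsPathFromTo E p a b → p.length ≤ d + 1) :
    (#{r : V × V → F | ¬ ∀ (k : ℕ) (X : Fin k → Fin n) (Y : Fin k → Fin m),
        Injective X → Injective Y → ((genMatrix E inp out r).submatrix X Y).det ≠ 0} : ℝ) /
        Fintype.card (V × V → F) ≤
      ∑ i ∈ Icc 1 n, (n.choose i : ℝ) * m.choose i * (d * i) / Fintype.card F := by
  set Z : Finset (Fin n) → Finset (Fin m) → Finset (V × V → F) := fun A B =>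
    {r | HasSingularMinorOn E inp out r A B}
  have hcover (r : V × V → F) (hr : ¬ ∀ (k : ℕ) (X : Fin k → Fin n) (Y : Fin k → Fin m),
      Injective X → Injective Y → ((genMatrix E inp out r).submatrix X Y).det ≠ 0) :
      r ∈ (Icc 1 n).biUnion fun i => (powersetCard i univ).biUnion fun A =>
        (powersetCard i univ).biUnion fun B => Z A B := by
    simp only [not_forall, not_not] at hr
    obtain ⟨k, X, Y, hX, hY, hdet⟩ := hr
    have hk : 1 ≤ k := Nat.pos_of_ne_zero (by rintro rfl; simp at hdet)
    have hkn : k ≤ n := by simpa using Fintype.card_le_of_injective X hX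
    simp only [mem_biUnion, mem_powersetCard, subset_univ, true_and, mem_Icc]
    refine ⟨k, ⟨hk, hkn⟩, univ.image X, by simp [card_image_of_injective _ hX], univ.image Y,
      by simp [card_image_of_injective _ hY], ?_⟩
    simp only [Z, mem_filter, mem_univ, true_and]
    exact ⟨k, X, Y, hX, hY, by simp, by simp, hdet⟩
  calc _ ≤ (∑ i ∈ Icc 1 n, ∑ A ∈ powersetCard i univ, ∑ B ∈ powersetCard i univ,
          (#(Z A B) : ℝ)) / Fintype.card (V × V → F) := by
        gcongr
        exact_mod_cast (card_le_card fun r hr => hcover r (mem_filter.1 hr).2).trans <|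
          card_biUnion_le.trans <| sum_le_sum fun i _ =>
            card_biUnion_le.trans <| sum_le_sum fun A _ => card_biUnion_le
    _ = ∑ i ∈ Icc 1 n, ∑ A ∈ powersetCard i univ, ∑ B ∈ powersetCard i univ,
          (#(Z A B) : ℝ) / Fintype.card (V × V → F) := by
        simp only [sum_div]
    _ ≤ ∑ i ∈ Icc 1 n, ∑ A ∈ powersetCard i (univ : Finset (Fin n)),
          ∑ B ∈ powersetCard i (univ : Finset (Fin m)), (i * d : ℝ) / Fintype.card F := by
        refine sum_le_sum fun i _ => sum_le_sum fun A hA => sum_le_sum fun B hB => ?_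
        rw [mem_powersetCard] at hA hB
        rw [← hA.2]
        exact card_hasSingularMinorOn_div_le hsc hdepth (hA.2.trans hB.2.symm)
    _ = _ := by
        refine sum_congr rfl fun i _ => ?_
        simp only [sum_const, card_powersetCard, card_univ, Fintype.card_fin, nsmul_eq_mul]
        ring

end Counting

/-- Assigning independent uniform random coefficients over a finite field `F` to the edges of
an `(n,m)`-superconcentrator of depth `d`, with probability at least
`1 - Σ_{i=1}^n C(n,i) C(m,i) d i / |F|` every square submatrix of the resulting generator
matrix is nonsingular, i.e. the circuit encodes a superconcentrator-induced code. -/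
theorem stmt_13 {V F : Type*} [Field F] [Fintype F] [Fintype V] {n m d : ℕ}
    (E : V → V → Prop) (inp : Fin n ↪ V) (out : Fin m ↪ V)
    (hsc : IsSuperconcentrator E inp out)
    (hdepth : ∀ (p : List V) (a b : V), IsPathFromTo E p a b → p.length ≤ d + 1) :
    (1 : ℝ) - ∑ i ∈ Finset.Icc 1 n,
        (n.choose i : ℝ) * (m.choose i) * (d * i) / (Fintype.card F) ≤
      ((Finset.univ.filter (fun r : V × V → F =>
          ∀ (k : ℕ) (X : Fin k → Fin n) (Y : Fin k → Fin m),
            Function.Injective X → Function.Injective Y →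
              ((genMatrix E inp out r).submatrix X Y).det ≠ 0)).card : ℝ) /
        (Fintype.card (V × V → F)) := by
  have hΩ : (0 : ℝ) < Fintype.card (V × V → F) := by exact_mod_cast Fintype.card_pos
  have hsplit := congrArg (fun N : ℕ => (N : ℝ) / Fintype.card (V × V → F))
    (Finset.card_filter_add_card_filter_not (s := Finset.univ) fun r : V × V → F =>
      ∀ (k : ℕ) (X : Fin k → Fin n) (Y : Fin k → Fin m),
        Function.Injective X → Function.Injective Y →
          ((genMatrix E inp out r).submatrix X Y).det ≠ 0)
  simp only [Nat.cast_add, add_div, Finset.card_univ, div_self hΩ.ne'] at hsplit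
  linarith [card_not_forall_det_ne_zero_div_le (F := F) hsc hdepth]
end

section
/- For every d ≥ 2 and every n ≥ 128, λ_d(n) ≤ ⌊√(n/2)⌋. -/
lemma two_mul_le_two_pow (k : ℕ) : 2 * k ≤ 2 ^ k := by
  cases k with
  | zero => simp
  | succ k =>
    have := Nat.lt_two_pow_self (n := k)
    rw [pow_succ]
    omega

lemma four_mul_sq_le_two_pow {k : ℕ} (hk : 8 ≤ k) : 4 * k ^ 2 ≤ 2 ^ k := by
  induction k, hk using Nat.le_induction with
  | base => norm_num
  | succ k hk ih =>
    rw [pow_succ 2 k]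
    nlinarith

lemma Nat.sqrt_le_max_one_half (m : ℕ) : Nat.sqrt m ≤ max 1 ((m + 1) / 2) := by
  rcases Nat.lt_or_ge m 2 with hm | hm
  · interval_cases m <;> simp
  · have : Nat.sqrt m < (m + 1) / 2 + 1 := by
      rw [Nat.sqrt_lt]
      nlinarith [Nat.div_add_mod (m + 1) 2, Nat.mod_lt (m + 1) two_pos]
    omega

lemma Nat.clog_two_le_max_one_half (m : ℕ) : Nat.clog 2 m ≤ max 1 ((m + 1) / 2) := by
  refine le_max_of_le_right ((Nat.clog_le_iff_le_pow one_lt_two).2 ?_)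
  have := two_mul_le_two_pow ((m + 1) / 2)
  omega

lemma Nat.clog_two_le_sqrt_half {n : ℕ} (hn : 128 ≤ n) : Nat.clog 2 n ≤ Nat.sqrt (n / 2) := by
  set k := Nat.clog 2 n
  rw [Nat.le_sqrt, Nat.le_div_iff_mul_le two_pos]
  rcases Nat.lt_or_ge k 8 with hk | hk
  · have : k * k ≤ 7 * 7 := Nat.mul_le_mul (by omega) (by omega)
    omega
  · have hlt : 2 ^ k.pred < n := Nat.pow_pred_clog_lt_self one_lt_two (by omega)
    have hpow : 2 ^ k = 2 * 2 ^ k.pred := by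
      rw [← pow_succ', Nat.succ_pred_eq_of_pos (by omega)]
    have := four_mul_sq_le_two_pow hk
    nlinarith

section Iteration

variable {f : ℕ → ℕ}

lemma iterate_le_one_of_le_max_one_half (hf : ∀ m, f m ≤ max 1 ((m + 1) / 2)) :
    ∀ k n, n ≤ 2 ^ k → f^[k] n ≤ 1 := by
  intro k
  induction k with
  | zero => simp
  | succ k ih =>
    intro n hn
    rw [Function.iterate_succ_apply]
    refine ih _ ((hf n).trans (max_le Nat.one_le_two_pow ?_))
    rw [pow_succ] at hn
    omega

lemma fstar_le_clog_two (hf : ∀ m, f m ≤ max 1 ((m + 1) / 2)) (n : ℕ) :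
    fstar f n ≤ Nat.clog 2 n :=
  Nat.sInf_le (iterate_le_one_of_le_max_one_half hf _ n (Nat.le_pow_clog one_lt_two n))

end Iteration

lemma lam_add_two_le_clog_two (d n : ℕ) : lam (d + 2) n ≤ Nat.clog 2 n := by
  induction d using Nat.strong_induction_on generalizing n with
  | _ d ih =>
    match d with
    | 0 => exact le_rfl
    | 1 => exact fstar_le_clog_two Nat.sqrt_le_max_one_half n
    | e + 2 =>
      exact fstar_le_clog_two
        (fun m => (ih e (by omega) m).trans (Nat.clog_two_le_max_one_half m)) n

theorem stmt_19 : ∀ d : ℕ, 2 ≤ d → ∀ n : ℕ, 128 ≤ n →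
    lam d n ≤ Nat.sqrt (n / 2) := by
  intro d hd n hn
  obtain ⟨d, rfl⟩ := Nat.exists_eq_add_of_le' hd
  exact (lam_add_two_le_clog_two d n).trans (Nat.clog_two_le_sqrt_half hn)
end
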